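/- arXiv:1908.02871 — 4 statements merged into one kernel-verified Lean document; each statement's English description precedes it below -/
import Mathlib

section
/- (Gradient Estimate) For all (x,t) ∈ [a,b]×[0,T) one has ρ(x,t)·√(1+ρₓ(x,t)²) ≤ c, where c = max_{x∈[a,b]} ρ(x,0)·√(1+ρₓ(x,0)²) depends only on the initial hypersurface. In the paper's notation this is the bound y·v ≤ c on the product of the height function and the gradient function. -/
open Set Real Filter Topology

/-- Spatial derivative ρₓ of the graph function. -/
noncomputable def rhoX (ρ : ℝ → ℝ → ℝ) (x t : ℝ) : ℝ := deriv (fun x' => ρ x' t) x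

/-- Second spatial derivative ρₓₓ of the graph function. -/
noncomputable def rhoXX (ρ : ℝ → ℝ → ℝ) (x t : ℝ) : ℝ := deriv (fun x' => rhoX ρ x' t) x

/-- Time derivative ∂ₜρ of the graph function. -/
noncomputable def rhoT (ρ : ℝ → ℝ → ℝ) (x t : ℝ) : ℝ := deriv (fun t' => ρ x t') t

/-- Principal curvature k = −ρₓₓ/(1+ρₓ²)^{3/2}. -/
noncomputable def curvK (ρ : ℝ → ℝ → ℝ) (x t : ℝ) : ℝ :=
  -(rhoXX ρ x t) / (1 + (rhoX ρ x t) ^ 2) ^ (3 / 2 : ℝ)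

/-- Principal (rotational) curvature p = 1/(ρ·√(1+ρₓ²)). -/
noncomputable def curvP (ρ : ℝ → ℝ → ℝ) (x t : ℝ) : ℝ :=
  1 / (ρ x t * Real.sqrt (1 + (rhoX ρ x t) ^ 2))

/-- Mean curvature H = k + p. -/
noncomputable def meanH (ρ : ℝ → ℝ → ℝ) (x t : ℝ) : ℝ := curvK ρ x t + curvP ρ x t

/-- Squared norm of the second fundamental form |A|² = k² + p². -/
noncomputable def normA2 (ρ : ℝ → ℝ → ℝ) (x t : ℝ) : ℝ := (curvK ρ x t) ^ 2 + (curvP ρ x t) ^ 2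

/-- Axially symmetric mean curvature flow with Neumann boundary data in graph form:
ρ is smooth, positive on [a,b]×[0,T), satisfies ∂ₜρ = ρₓₓ/(1+ρₓ²) − 1/ρ there, and
ρₓ(a,t) = ρₓ(b,t) = 0 for all t ∈ [0,T). -/
def IsAxisymMCF (a b T : ℝ) (ρ : ℝ → ℝ → ℝ) : Prop :=
  a < b ∧ 0 < T ∧ ContDiff ℝ (⊤ : ℕ∞) (Function.uncurry ρ) ∧
  (∀ x ∈ Icc a b, ∀ t ∈ Ico (0 : ℝ) T, 0 < ρ x t) ∧
  (∀ x ∈ Icc a b, ∀ t ∈ Ico (0 : ℝ) T,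
      rhoT ρ x t = rhoXX ρ x t / (1 + (rhoX ρ x t) ^ 2) - 1 / ρ x t) ∧
  (∀ t ∈ Ico (0 : ℝ) T, rhoX ρ a t = 0 ∧ rhoX ρ b t = 0)


private noncomputable def PX (F : ℝ × ℝ → ℝ) : ℝ × ℝ → ℝ := fun p => fderiv ℝ F p (1, 0)
private noncomputable def PT (F : ℝ × ℝ → ℝ) : ℝ × ℝ → ℝ := fun p => fderiv ℝ F p (0, 1)
private noncomputable def PXX (F : ℝ × ℝ → ℝ) : ℝ × ℝ → ℝ := fun p => fderiv ℝ (PX F) p (1, 0)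

private lemma sect_x {G : ℝ × ℝ → ℝ} (hG : Differentiable ℝ G) (x t : ℝ) :
    HasDerivAt (fun x' => G (x', t)) (fderiv ℝ G (x, t) (1, 0)) x := by
  have h1 : HasDerivAt (fun x' : ℝ => (x', t)) ((1 : ℝ), (0 : ℝ)) x :=
    (hasDerivAt_id x).prodMk (hasDerivAt_const x t)
  exact (hG (x, t)).hasFDerivAt.comp_hasDerivAt x h1

private lemma sect_t {G : ℝ × ℝ → ℝ} (hG : Differentiable ℝ G) (x t : ℝ) :
    HasDerivAt (fun t' => G (x, t')) (fderiv ℝ G (x, t) (0, 1)) t := by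
  have h1 : HasDerivAt (fun t' : ℝ => (x, t')) ((0 : ℝ), (1 : ℝ)) t :=
    (hasDerivAt_const t x).prodMk (hasDerivAt_id t)
  exact (hG (x, t)).hasFDerivAt.comp_hasDerivAt t h1

private lemma hasDerivAt_sqrt_one_add_sq {g : ℝ → ℝ} {d τ : ℝ} (hg : HasDerivAt g d τ) :
    HasDerivAt (fun s => Real.sqrt (1 + g s ^ 2)) (g τ * d / Real.sqrt (1 + g τ ^ 2)) τ := by
  have h2 : (0:ℝ) < 1 + g τ ^ 2 := by positivity
  have hs : Real.sqrt (1 + g τ ^ 2) ≠ 0 := by positivity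
  have h1 : HasDerivAt (fun s => 1 + g s ^ 2) (2 * g τ * d) τ := by
    have h := (hasDerivAt_const τ (1:ℝ)).add (hg.pow 2)
    refine h.congr_deriv (Eq.symm ?_)
    simp [pow_one]
  have h3 := (Real.hasDerivAt_sqrt (ne_of_gt h2)).comp τ h1
  refine h3.congr_deriv (Eq.symm ?_)
  field_simp

private lemma smooth_PX {F : ℝ × ℝ → ℝ} (h : ContDiff ℝ (⊤ : ℕ∞) F) : ContDiff ℝ (⊤ : ℕ∞) (PX F) :=
  (h.fderiv_right (by simp)).clm_apply contDiff_const

private lemma smooth_PT {F : ℝ × ℝ → ℝ} (h : ContDiff ℝ (⊤ : ℕ∞) F) : ContDiff ℝ (⊤ : ℕ∞) (PT F) :=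
  (h.fderiv_right (by simp)).clm_apply contDiff_const

private lemma smooth_PXX {F : ℝ × ℝ → ℝ} (h : ContDiff ℝ (⊤ : ℕ∞) F) : ContDiff ℝ (⊤ : ℕ∞) (PXX F) :=
  ((smooth_PX h).fderiv_right (by simp)).clm_apply contDiff_const

private lemma mixed_symm {F : ℝ × ℝ → ℝ} (h : ContDiff ℝ (⊤ : ℕ∞) F) (p : ℝ × ℝ) :
    fderiv ℝ (PX F) p (0, 1) = fderiv ℝ (PT F) p (1, 0) := by
  have hFd : Differentiable ℝ F := h.differentiable (by simp)
  have hD : ContDiff ℝ (⊤ : ℕ∞) (fderiv ℝ F) := h.fderiv_right (by simp)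
  have hD2 : HasFDerivAt (fderiv ℝ F) (fderiv ℝ (fderiv ℝ F) p) p :=
    ((hD.differentiable (by simp)) p).hasFDerivAt
  have hsym := second_derivative_symmetric (fun y => (hFd y).hasFDerivAt) hD2
    ((0:ℝ), (1:ℝ)) ((1:ℝ), (0:ℝ))
  have e1 : HasFDerivAt (PX F)
      ((ContinuousLinearMap.apply ℝ ℝ ((1:ℝ), (0:ℝ))).comp (fderiv ℝ (fderiv ℝ F) p)) p :=
    (ContinuousLinearMap.apply ℝ ℝ ((1:ℝ), (0:ℝ))).hasFDerivAt.comp p hD2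
  have e2 : HasFDerivAt (PT F)
      ((ContinuousLinearMap.apply ℝ ℝ ((0:ℝ), (1:ℝ))).comp (fderiv ℝ (fderiv ℝ F) p)) p :=
    (ContinuousLinearMap.apply ℝ ℝ ((0:ℝ), (1:ℝ))).hasFDerivAt.comp p hD2
  rw [e1.fderiv, e2.fderiv]
  simpa using hsym

private lemma deriv_nonneg_of_max_left {f : ℝ → ℝ} {f' t₀ δ : ℝ} (hδ : 0 < δ)
    (hd : HasDerivAt f f' t₀) (hmax : ∀ s ∈ Icc (t₀ - δ) t₀, f s ≤ f t₀) : 0 ≤ f' := by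
  have h : Tendsto (slope f t₀) (𝓝[<] t₀) (𝓝 f') :=
    (hasDerivAt_iff_tendsto_slope.1 hd).mono_left
      (nhdsWithin_mono _ (fun y hy => ne_of_lt hy))
  refine ge_of_tendsto h ?_
  filter_upwards [Ioo_mem_nhdsLT_of_mem (⟨by linarith, le_refl _⟩ : t₀ ∈ Ioc (t₀ - δ) t₀)]
    with s hs
  have h1 : f s ≤ f t₀ := hmax s ⟨hs.1.le, hs.2.le⟩
  rw [slope_def_field]
  exact div_nonneg_of_nonpos (by linarith) (by linarith [hs.2])

private lemma second_deriv_nonpos_right {f f' : ℝ → ℝ} {x₀ c δ : ℝ} (hδ : 0 < δ)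
    (hf : ∀ x, HasDerivAt f (f' x) x) (hf' : HasDerivAt f' c x₀) (h0 : f' x₀ = 0)
    (hmax : ∀ x ∈ Icc x₀ (x₀ + δ), f x ≤ f x₀) : c ≤ 0 := by
  by_contra hc
  push_neg at hc
  have h : Tendsto (slope f' x₀) (𝓝[>] x₀) (𝓝 c) :=
    (hasDerivAt_iff_tendsto_slope.1 hf').mono_left
      (nhdsWithin_mono _ (fun y hy => ne_of_gt hy))
  have hev : {y | 0 < slope f' x₀ y} ∈ 𝓝[>] x₀ :=
    h.eventually (eventually_gt_nhds hc)
  obtain ⟨z, hz, hsub⟩ := mem_nhdsGT_iff_exists_Ioo_subset.1 hev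
  set e := min z (x₀ + δ) with he
  have hxe : x₀ < e := lt_min hz (by linarith)
  have hpos : ∀ yy ∈ Ioo x₀ e, 0 < f' yy := by
    intro yy hyy
    have h1 : 0 < slope f' x₀ yy := hsub ⟨hyy.1, lt_of_lt_of_le hyy.2 (min_le_left _ _)⟩
    rw [slope_def_field, h0, sub_zero] at h1
    have h2 : 0 < yy - x₀ := by linarith [hyy.1]
    have := mul_pos h1 h2
    rwa [div_mul_cancel₀ _ (ne_of_gt h2)] at this
  have hmono : StrictMonoOn f (Icc x₀ e) := by
    apply strictMonoOn_of_deriv_pos (convex_Icc _ _)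
      (fun x _ => (hf x).continuousAt.continuousWithinAt)
    intro x hx
    rw [interior_Icc] at hx
    rw [(hf x).deriv]
    exact hpos x hx
  have h5 : f x₀ < f e := hmono ⟨le_refl _, hxe.le⟩ ⟨hxe.le, le_refl _⟩ hxe
  have h6 : f e ≤ f x₀ := hmax e ⟨hxe.le, min_le_right _ _⟩
  linarith

private lemma second_deriv_nonpos_left {f f' : ℝ → ℝ} {x₀ c δ : ℝ} (hδ : 0 < δ)
    (hf : ∀ x, HasDerivAt f (f' x) x) (hf' : HasDerivAt f' c x₀) (h0 : f' x₀ = 0)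
    (hmax : ∀ x ∈ Icc (x₀ - δ) x₀, f x ≤ f x₀) : c ≤ 0 := by
  by_contra hc
  push_neg at hc
  have h : Tendsto (slope f' x₀) (𝓝[<] x₀) (𝓝 c) :=
    (hasDerivAt_iff_tendsto_slope.1 hf').mono_left
      (nhdsWithin_mono _ (fun y hy => ne_of_lt hy))
  have hev : {y | 0 < slope f' x₀ y} ∈ 𝓝[<] x₀ :=
    h.eventually (eventually_gt_nhds hc)
  obtain ⟨z, hz, hsub⟩ := mem_nhdsLT_iff_exists_Ioo_subset.1 hev
  set e := max z (x₀ - δ) with he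
  have hxe : e < x₀ := max_lt hz (by linarith)
  have hneg : ∀ yy ∈ Ioo e x₀, f' yy < 0 := by
    intro yy hyy
    have h1 : 0 < slope f' x₀ yy := hsub ⟨lt_of_le_of_lt (le_max_left _ _) hyy.1, hyy.2⟩
    rw [slope_def_field, h0, sub_zero] at h1
    have h2 : yy - x₀ < 0 := by linarith [hyy.2]
    by_contra hcon
    push_neg at hcon
    have : f' yy / (yy - x₀) ≤ 0 := div_nonpos_of_nonneg_of_nonpos hcon h2.le
    linarith
  have hmono : StrictAntiOn f (Icc e x₀) := by
    apply strictAntiOn_of_deriv_neg (convex_Icc _ _)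
      (fun x _ => (hf x).continuousAt.continuousWithinAt)
    intro x hx
    rw [interior_Icc] at hx
    rw [(hf x).deriv]
    exact hneg x hx
  have h5 : f x₀ < f e := hmono ⟨le_refl _, hxe.le⟩ ⟨hxe.le, le_refl _⟩ hxe
  have h6 : f e ≤ f x₀ := hmax e ⟨le_max_right _ _, hxe.le⟩
  linarith

private lemma second_deriv_nonpos_two {f f' : ℝ → ℝ} {x₀ c aa bb : ℝ} (ha : aa ≤ x₀)
    (hb : x₀ ≤ bb) (hab : aa < bb)
    (hf : ∀ x, HasDerivAt f (f' x) x) (hf' : HasDerivAt f' c x₀) (h0 : f' x₀ = 0)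
    (hmax : ∀ x ∈ Icc aa bb, f x ≤ f x₀) : c ≤ 0 := by
  rcases eq_or_lt_of_le hb with hbe | hlt
  · refine second_deriv_nonpos_left (show (0:ℝ) < x₀ - aa by rw [← hbe] at hab; linarith)
      hf hf' h0 ?_
    intro z hz
    exact hmax z ⟨by linarith [hz.1], by linarith [hz.2, hbe ▸ le_refl x₀]⟩
  · refine second_deriv_nonpos_right (show (0:ℝ) < bb - x₀ by linarith) hf hf' h0 ?_
    intro z hz
    exact hmax z ⟨by linarith [hz.1], by linarith [hz.2]⟩

private lemma key_ineq (Y U Q R S V : ℝ) (hY : 0 < Y) (hV : 0 < V) (hv2 : V ^ 2 = 1 + U ^ 2)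
    (hcrit : U * V + Y * (U * Q / V) = 0)
    (hS : U * S = U * ((R * (1 + U ^ 2) - Q * (2 * U * Q)) / (1 + U ^ 2) ^ 2 + U / Y ^ 2)) :
    (Q / (1 + U ^ 2) - 1 / Y) * V + Y * (U * S / V) ≤
      ((Q * V + U * (U * Q / V)) +
        (((U * U + Y * Q) * Q + Y * U * R) * V - Y * U * Q * (U * Q / V)) / V ^ 2) / V ^ 2
        - 1 / (Y * V) := by
  have hVne : V ≠ 0 := ne_of_gt hV
  have hYne : Y ≠ 0 := ne_of_gt hY
  have h1u : (0:ℝ) < 1 + U ^ 2 := by positivity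
  have hcrit' : U * (V ^ 2 + Y * Q) = 0 := by
    have := congrArg (· * V) hcrit
    field_simp at this
    nlinarith [this]
  rw [hS, ← hv2]
  rcases mul_eq_zero.1 hcrit' with hU | hQ
  · rw [hU]
    have hV1 : V = 1 := by nlinarith
    rw [hV1]
    field_simp
    nlinarith [sq_nonneg (Q*Y), hY.le]
  · have hQ2 : Q = -V ^ 2 / Y := by field_simp; linarith
    have hUV : U ^ 2 = V ^ 2 - 1 := by linarith
    rw [hQ2]
    have heq : (-V ^ 2 / Y / V ^ 2 - 1 / Y) * V +
        Y * (U * ((R * V ^ 2 - -V ^ 2 / Y * (2 * U * (-V ^ 2 / Y))) / (V ^ 2) ^ 2 + U / Y ^ 2) / V) =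
        ((-V ^ 2 / Y * V + U * (U * (-V ^ 2 / Y) / V)) +
        (((U * U + Y * (-V ^ 2 / Y)) * (-V ^ 2 / Y) + Y * U * R) * V -
          Y * U * (-V ^ 2 / Y) * (U * (-V ^ 2 / Y) / V)) / V ^ 2) / V ^ 2 - 1 / (Y * V) - 1/(Y*V) := by
      field_simp
      ring_nf
      linear_combination (2 * V ^ 2) * hUV
    rw [heq]
    have h7 : 0 < 1/(Y*V) := by positivity
    linarith

private lemma core {a b T : ℝ} {F : ℝ × ℝ → ℝ} (hab : a < b) (hsmooth : ContDiff ℝ (⊤ : ℕ∞) F)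
    (hpos : ∀ x ∈ Icc a b, ∀ s ∈ Ico (0:ℝ) T, 0 < F (x, s))
    (hPDE : ∀ x ∈ Icc a b, ∀ s ∈ Ico (0:ℝ) T,
      PT F (x, s) = PXX F (x, s) / (1 + PX F (x, s) ^ 2) - 1 / F (x, s))
    (hNeu : ∀ s ∈ Ico (0:ℝ) T, PX F (a, s) = 0 ∧ PX F (b, s) = 0)
    {x₀ t₀ t : ℝ} (hx₀ : x₀ ∈ Icc a b) (ht₀ : 0 < t₀) (ht₀t : t₀ ≤ t) (htT : t < T)
    (hmax : ∀ p ∈ Icc a b ×ˢ Icc (0:ℝ) t,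
      F p * Real.sqrt (1 + PX F p ^ 2) ≤ F (x₀, t₀) * Real.sqrt (1 + PX F (x₀, t₀) ^ 2)) :
    False := by
  have hFd : Differentiable ℝ F := hsmooth.differentiable (by simp)
  have hpxd : Differentiable ℝ (PX F) := (smooth_PX hsmooth).differentiable (by simp)
  have hpxxd : Differentiable ℝ (PXX F) := (smooth_PXX hsmooth).differentiable (by simp)
  have hptd : Differentiable ℝ (PT F) := (smooth_PT hsmooth).differentiable (by simp)
  have ht₀T : t₀ ∈ Ico (0:ℝ) T := ⟨ht₀.le, lt_of_le_of_lt ht₀t htT⟩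
  have hY : 0 < F (x₀, t₀) := hpos x₀ hx₀ t₀ ht₀T
  have hVpos : 0 < Real.sqrt (1 + PX F (x₀, t₀) ^ 2) := Real.sqrt_pos.2 (by positivity)
  have hVne : Real.sqrt (1 + PX F (x₀, t₀) ^ 2) ≠ 0 := ne_of_gt hVpos
  have hv2 : (Real.sqrt (1 + PX F (x₀, t₀) ^ 2)) ^ 2 = 1 + PX F (x₀, t₀) ^ 2 :=
    Real.sq_sqrt (by positivity)
  -- sections in x at time t₀
  have Hy : ∀ z, HasDerivAt (fun x => F (x, t₀)) (PX F (z, t₀)) z := fun z => sect_x hFd z t₀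
  have Hu : ∀ z, HasDerivAt (fun x => PX F (x, t₀)) (PXX F (z, t₀)) z := fun z => sect_x hpxd z t₀
  have HQ : HasDerivAt (fun x => PXX F (x, t₀)) (fderiv ℝ (PXX F) (x₀, t₀) (1, 0)) x₀ :=
    sect_x hpxxd x₀ t₀
  have Hv : ∀ z, HasDerivAt (fun x => Real.sqrt (1 + PX F (x, t₀) ^ 2))
      (PX F (z, t₀) * PXX F (z, t₀) / Real.sqrt (1 + PX F (z, t₀) ^ 2)) z :=
    fun z => hasDerivAt_sqrt_one_add_sq (Hu z)
  -- W and Wx in x-direction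
  have HW : ∀ z, HasDerivAt (fun x => F (x, t₀) * Real.sqrt (1 + PX F (x, t₀) ^ 2))
      (PX F (z, t₀) * Real.sqrt (1 + PX F (z, t₀) ^ 2) +
        F (z, t₀) * (PX F (z, t₀) * PXX F (z, t₀) / Real.sqrt (1 + PX F (z, t₀) ^ 2))) z :=
    fun z => (Hy z).mul (Hv z)
  -- second derivative of W in x at x₀, in the exact shape of key_ineq's RHS numerator
  have HC : HasDerivAt (fun z => PX F (z, t₀) * Real.sqrt (1 + PX F (z, t₀) ^ 2) +
        F (z, t₀) * (PX F (z, t₀) * PXX F (z, t₀) / Real.sqrt (1 + PX F (z, t₀) ^ 2)))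
      ((PXX F (x₀, t₀) * Real.sqrt (1 + PX F (x₀, t₀) ^ 2) +
          PX F (x₀, t₀) * (PX F (x₀, t₀) * PXX F (x₀, t₀) / Real.sqrt (1 + PX F (x₀, t₀) ^ 2))) +
        (((PX F (x₀, t₀) * PX F (x₀, t₀) + F (x₀, t₀) * PXX F (x₀, t₀)) * PXX F (x₀, t₀) +
            F (x₀, t₀) * PX F (x₀, t₀) * fderiv ℝ (PXX F) (x₀, t₀) (1, 0)) *
              Real.sqrt (1 + PX F (x₀, t₀) ^ 2) -
          F (x₀, t₀) * PX F (x₀, t₀) * PXX F (x₀, t₀) *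
            (PX F (x₀, t₀) * PXX F (x₀, t₀) / Real.sqrt (1 + PX F (x₀, t₀) ^ 2))) /
          (Real.sqrt (1 + PX F (x₀, t₀) ^ 2)) ^ 2) x₀ := by
    have hcomb := ((Hu x₀).mul (Hv x₀)).add
      ((Hy x₀).mul (((Hu x₀).mul HQ).div (Hv x₀) hVne))
    refine hcomb.congr_deriv (Eq.symm ?_)
    simp only [Pi.mul_apply, Pi.div_apply]
    field_simp
    ring

  -- spatial maximality at time t₀
  have hsp : ∀ z ∈ Icc a b, F (z, t₀) * Real.sqrt (1 + PX F (z, t₀) ^ 2) ≤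
      F (x₀, t₀) * Real.sqrt (1 + PX F (x₀, t₀) ^ 2) :=
    fun z hz => hmax (z, t₀) ⟨hz, ⟨ht₀.le, ht₀t⟩⟩
  -- first spatial derivative of W vanishes at x₀
  have h0 : PX F (x₀, t₀) * Real.sqrt (1 + PX F (x₀, t₀) ^ 2) +
      F (x₀, t₀) * (PX F (x₀, t₀) * PXX F (x₀, t₀) / Real.sqrt (1 + PX F (x₀, t₀) ^ 2)) = 0 := by
    rcases eq_or_lt_of_le hx₀.1 with ha | ha
    · rw [← ha, (hNeu t₀ ht₀T).1]
      ring
    · rcases eq_or_lt_of_le hx₀.2 with hb | hb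
      · rw [hb, (hNeu t₀ ht₀T).2]
        ring
      · have hloc : IsLocalMax (fun x => F (x, t₀) * Real.sqrt (1 + PX F (x, t₀) ^ 2)) x₀ := by
          filter_upwards [Icc_mem_nhds ha hb] with z hz using hsp z hz
        exact hloc.hasDerivAt_eq_zero (HW x₀)
  -- second spatial derivative of W is nonpositive at x₀
  have hc := second_deriv_nonpos_two hx₀.1 hx₀.2 hab HW HC h0 hsp
  -- the time derivative of the spatial gradient term
  have hS : PX F (x₀, t₀) * fderiv ℝ (PX F) (x₀, t₀) (0, 1) =
      PX F (x₀, t₀) * ((fderiv ℝ (PXX F) (x₀, t₀) (1, 0) * (1 + PX F (x₀, t₀) ^ 2) -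
        PXX F (x₀, t₀) * (2 * PX F (x₀, t₀) * PXX F (x₀, t₀))) / (1 + PX F (x₀, t₀) ^ 2) ^ 2 +
        PX F (x₀, t₀) / F (x₀, t₀) ^ 2) := by
    rcases eq_or_lt_of_le hx₀.1 with ha | ha
    · rw [← ha, (hNeu t₀ ht₀T).1]
      ring
    · rcases eq_or_lt_of_le hx₀.2 with hb | hb
      · rw [hb, (hNeu t₀ ht₀T).2]
        ring
      · have hEq : (fun x => PT F (x, t₀)) =ᶠ[𝓝 x₀]
            (fun x => PXX F (x, t₀) / (1 + PX F (x, t₀) ^ 2) - 1 / F (x, t₀)) := by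
          filter_upwards [Icc_mem_nhds ha hb] with z hz using hPDE z hz t₀ ht₀T
        have h1add : HasDerivAt (fun x => 1 + PX F (x, t₀) ^ 2)
            (2 * PX F (x₀, t₀) * PXX F (x₀, t₀)) x₀ := by
          have h := (hasDerivAt_const x₀ (1:ℝ)).add ((Hu x₀).pow 2)
          refine h.congr_deriv (Eq.symm ?_)
          simp [pow_one]
        have hYne : F (x₀, t₀) ≠ 0 := ne_of_gt hY
        have h1ne : (1 : ℝ) + PX F (x₀, t₀) ^ 2 ≠ 0 := by positivity
        have hRHS : HasDerivAt
            (fun x => PXX F (x, t₀) / (1 + PX F (x, t₀) ^ 2) - 1 / F (x, t₀))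
            ((fderiv ℝ (PXX F) (x₀, t₀) (1, 0) * (1 + PX F (x₀, t₀) ^ 2) -
              PXX F (x₀, t₀) * (2 * PX F (x₀, t₀) * PXX F (x₀, t₀))) / (1 + PX F (x₀, t₀) ^ 2) ^ 2
              - (0 * F (x₀, t₀) - 1 * PX F (x₀, t₀)) / F (x₀, t₀) ^ 2) x₀ :=
          (HQ.div h1add h1ne).sub ((hasDerivAt_const x₀ (1:ℝ)).div (Hy x₀) hYne)
        have hLHS : HasDerivAt (fun x => PT F (x, t₀)) (fderiv ℝ (PT F) (x₀, t₀) (1, 0)) x₀ :=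
          sect_x hptd x₀ t₀
        have hST : fderiv ℝ (PT F) (x₀, t₀) (1, 0) =
            (fderiv ℝ (PXX F) (x₀, t₀) (1, 0) * (1 + PX F (x₀, t₀) ^ 2) -
              PXX F (x₀, t₀) * (2 * PX F (x₀, t₀) * PXX F (x₀, t₀))) / (1 + PX F (x₀, t₀) ^ 2) ^ 2
              - (0 * F (x₀, t₀) - 1 * PX F (x₀, t₀)) / F (x₀, t₀) ^ 2 := by
          rw [← hLHS.deriv, ← hRHS.deriv]
          exact hEq.deriv_eq
        rw [mixed_symm hsmooth, hST]
        ring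
  -- time derivative of W at (x₀, t₀) is nonnegative
  have Hg : HasDerivAt (fun s => F (x₀, s) * Real.sqrt (1 + PX F (x₀, s) ^ 2))
      (PT F (x₀, t₀) * Real.sqrt (1 + PX F (x₀, t₀) ^ 2) + F (x₀, t₀) *
        (PX F (x₀, t₀) * fderiv ℝ (PX F) (x₀, t₀) (0, 1) / Real.sqrt (1 + PX F (x₀, t₀) ^ 2))) t₀ :=
    (sect_t hFd x₀ t₀).mul (hasDerivAt_sqrt_one_add_sq (sect_t hpxd x₀ t₀))
  have htime : 0 ≤ PT F (x₀, t₀) * Real.sqrt (1 + PX F (x₀, t₀) ^ 2) + F (x₀, t₀) *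
      (PX F (x₀, t₀) * fderiv ℝ (PX F) (x₀, t₀) (0, 1) / Real.sqrt (1 + PX F (x₀, t₀) ^ 2)) :=
    deriv_nonneg_of_max_left ht₀ Hg
      (fun s hs => hmax (x₀, s) ⟨hx₀, ⟨by linarith [hs.1], le_trans hs.2 ht₀t⟩⟩)
  -- combine
  have hP := hPDE x₀ hx₀ t₀ ht₀T
  have hkey := key_ineq (F (x₀, t₀)) (PX F (x₀, t₀)) (PXX F (x₀, t₀))
    (fderiv ℝ (PXX F) (x₀, t₀) (1, 0)) (fderiv ℝ (PX F) (x₀, t₀) (0, 1))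
    (Real.sqrt (1 + PX F (x₀, t₀) ^ 2)) hY hVpos hv2 h0 hS
  rw [← hP] at hkey
  have hdiv := div_nonpos_of_nonpos_of_nonneg hc
    (sq_nonneg (Real.sqrt (1 + PX F (x₀, t₀) ^ 2)))
  have hfin : 0 < 1 / (F (x₀, t₀) * Real.sqrt (1 + PX F (x₀, t₀) ^ 2)) := by positivity
  linarith [hkey, htime, hdiv, hfin]

private lemma rhoX_eq (ρ : ℝ → ℝ → ℝ) (h : ContDiff ℝ (⊤ : ℕ∞) (Function.uncurry ρ)) (x t : ℝ) :
    deriv (fun x' => ρ x' t) x = PX (Function.uncurry ρ) (x, t) :=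
  (sect_x (h.differentiable (by simp)) x t).deriv

private lemma rhoT_eq (ρ : ℝ → ℝ → ℝ) (h : ContDiff ℝ (⊤ : ℕ∞) (Function.uncurry ρ)) (x t : ℝ) :
    deriv (fun t' => ρ x t') t = PT (Function.uncurry ρ) (x, t) :=
  (sect_t (h.differentiable (by simp)) x t).deriv

private lemma rhoXX_eq (ρ : ℝ → ℝ → ℝ) (h : ContDiff ℝ (⊤ : ℕ∞) (Function.uncurry ρ)) (x t : ℝ) :
    deriv (fun x' => deriv (fun x'' => ρ x'' t) x') x = PXX (Function.uncurry ρ) (x, t) := by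
  have h1 : (fun x' => deriv (fun x'' => ρ x'' t) x') = fun x' => PX (Function.uncurry ρ) (x', t) :=
    funext fun x' => rhoX_eq ρ h x' t
  rw [h1]
  exact (sect_x ((smooth_PX h).differentiable (by simp)) x t).deriv

/-- Gradient Estimate: y·v ≤ max_{x∈[a,b]} y(x,0)·v(x,0). -/
theorem gradient_estimate (a b T : ℝ) (ρ : ℝ → ℝ → ℝ)
    (hflow : IsAxisymMCF a b T ρ) :
    ∀ x ∈ Icc a b, ∀ t ∈ Ico (0 : ℝ) T,
      ρ x t * Real.sqrt (1 + (rhoX ρ x t) ^ 2) ≤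
        sSup ((fun x' => ρ x' 0 * Real.sqrt (1 + (rhoX ρ x' 0) ^ 2)) '' Icc a b) := by
  obtain ⟨hab, hT, hsm, hpos, hPDE, hNeu⟩ := hflow
  simp only [rhoX, rhoXX, rhoT] at hPDE hNeu ⊢
  intro x hx t ht
  set F := Function.uncurry ρ with hF
  have hpos' : ∀ x ∈ Icc a b, ∀ s ∈ Ico (0:ℝ) T, 0 < F (x, s) := hpos
  have hPDE' : ∀ x ∈ Icc a b, ∀ s ∈ Ico (0:ℝ) T,
      PT F (x, s) = PXX F (x, s) / (1 + PX F (x, s) ^ 2) - 1 / F (x, s) := by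
    intro x' hx' s hs
    have h := hPDE x' hx' s hs
    rwa [rhoT_eq ρ hsm, rhoXX_eq ρ hsm, rhoX_eq ρ hsm] at h
  have hNeu' : ∀ s ∈ Ico (0:ℝ) T, PX F (a, s) = 0 ∧ PX F (b, s) = 0 := by
    intro s hs
    have h := hNeu s hs
    rwa [rhoX_eq ρ hsm, rhoX_eq ρ hsm] at h
  rw [rhoX_eq ρ hsm]
  have himg : (fun x' => ρ x' 0 * Real.sqrt (1 + (deriv (fun x'' => ρ x'' 0) x') ^ 2)) =
      fun x' => F (x', 0) * Real.sqrt (1 + PX F (x', 0) ^ 2) := by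
    funext x'
    rw [rhoX_eq ρ hsm]
    rfl
  rw [himg]
  -- continuity of the quantity W
  have hpxs : ContDiff ℝ (⊤ : ℕ∞) (PX F) := smooth_PX hsm
  have hWc : Continuous (fun p : ℝ × ℝ => F p * Real.sqrt (1 + PX F p ^ 2)) :=
    hsm.continuous.mul (Real.continuous_sqrt.comp
      (continuous_const.add (hpxs.continuous.pow 2)))
  -- compact maximum
  have hKc : IsCompact (Icc a b ×ˢ Icc (0:ℝ) t) := isCompact_Icc.prod isCompact_Icc
  have hKne : (Icc a b ×ˢ Icc (0:ℝ) t).Nonempty :=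
    ⟨(a, 0), ⟨⟨le_refl a, hab.le⟩, ⟨le_refl 0, ht.1⟩⟩⟩
  obtain ⟨⟨x₀, t₀⟩, hmem, hmax⟩ := hKc.exists_isMaxOn hKne hWc.continuousOn
  have hmax' : ∀ p ∈ Icc a b ×ˢ Icc (0:ℝ) t,
      F p * Real.sqrt (1 + PX F p ^ 2) ≤ F (x₀, t₀) * Real.sqrt (1 + PX F (x₀, t₀) ^ 2) :=
    fun p hp => hmax hp
  have hchain : F (x, t) * Real.sqrt (1 + PX F (x, t) ^ 2) ≤
      F (x₀, t₀) * Real.sqrt (1 + PX F (x₀, t₀) ^ 2) :=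
    hmax' (x, t) ⟨hx, ⟨ht.1, le_refl t⟩⟩
  have ht₀0 : t₀ = 0 := by
    by_contra h
    have ht₀ : 0 < t₀ := lt_of_le_of_ne hmem.2.1 (Ne.symm h)
    exact core hab hsm hpos' hPDE' hNeu' hmem.1 ht₀ hmem.2.2 ht.2 hmax'
  -- conclude
  have hbdd : BddAbove ((fun x' => F (x', 0) * Real.sqrt (1 + PX F (x', 0) ^ 2)) '' Icc a b) :=
    (isCompact_Icc.image (by
      have : Continuous (fun x' : ℝ => F (x', 0) * Real.sqrt (1 + PX F (x', 0) ^ 2)) :=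
        hWc.comp (continuous_id.prodMk continuous_const)
      exact this)).bddAbove
  have hmem0 : F (x₀, 0) * Real.sqrt (1 + PX F (x₀, 0) ^ 2) ∈
      ((fun x' => F (x', 0) * Real.sqrt (1 + PX F (x', 0) ^ 2)) '' Icc a b) :=
    ⟨x₀, hmem.1, rfl⟩
  calc F (x, t) * Real.sqrt (1 + PX F (x, t) ^ 2)
      ≤ F (x₀, t₀) * Real.sqrt (1 + PX F (x₀, t₀) ^ 2) := hchain
    _ = F (x₀, 0) * Real.sqrt (1 + PX F (x₀, 0) ^ 2) := by rw [ht₀0]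
    _ ≤ _ := le_csSup hbdd hmem0
end

section
/- (Absolute Curvature Estimate) Let c > 0. There exists a constant C > 0, depending only on c and the initial hypersurface, such that for every (x₀,t₀) ∈ [a,b]×[0,T) satisfying H(x₀,t₀) ≥ 0 or |H(x₀,t₀)| ≤ c, one has |k(x₀,t₀)|/p(x₀,t₀) ≤ C. -/
open Set Real Filter

open Function Topology

noncomputable def D1 (g : ℝ → ℝ → ℝ) (x t : ℝ) : ℝ := deriv (fun x' => g x' t) x
noncomputable def D2 (g : ℝ → ℝ → ℝ) (x t : ℝ) : ℝ := deriv (fun t' => g x t') t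

variable {g : ℝ → ℝ → ℝ}

theorem hasDerivAt_slice1 (hg : ContDiff ℝ (⊤ : ℕ∞) (uncurry g)) (x t : ℝ) :
    HasDerivAt (fun x' => g x' t) (fderiv ℝ (uncurry g) (x, t) (1, 0)) x := by
  have h1 : HasDerivAt (fun x' : ℝ => ((x' : ℝ), t)) ((1:ℝ), (0:ℝ)) x :=
    HasDerivAt.prodMk (hasDerivAt_id x) (hasDerivAt_const x t)
  have h2 := (hg.differentiable (by simp) (x, t)).hasFDerivAt
  exact h2.comp_hasDerivAt x h1

theorem hasDerivAt_slice2 (hg : ContDiff ℝ (⊤ : ℕ∞) (uncurry g)) (x t : ℝ) :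
    HasDerivAt (fun t' => g x t') (fderiv ℝ (uncurry g) (x, t) (0, 1)) t := by
  have h1 : HasDerivAt (fun t' : ℝ => ((x : ℝ), t')) ((0:ℝ), (1:ℝ)) t :=
    HasDerivAt.prodMk (hasDerivAt_const t x) (hasDerivAt_id t)
  have h2 := (hg.differentiable (by simp) (x, t)).hasFDerivAt
  exact h2.comp_hasDerivAt t h1

theorem D1_eq (hg : ContDiff ℝ (⊤ : ℕ∞) (uncurry g)) (x t : ℝ) :
    D1 g x t = fderiv ℝ (uncurry g) (x, t) (1, 0) := (hasDerivAt_slice1 hg x t).deriv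

theorem D2_eq (hg : ContDiff ℝ (⊤ : ℕ∞) (uncurry g)) (x t : ℝ) :
    D2 g x t = fderiv ℝ (uncurry g) (x, t) (0, 1) := (hasDerivAt_slice2 hg x t).deriv

theorem hasDerivAt_D1 (hg : ContDiff ℝ (⊤ : ℕ∞) (uncurry g)) (x t : ℝ) :
    HasDerivAt (fun x' => g x' t) (D1 g x t) x := by
  rw [D1_eq hg]; exact hasDerivAt_slice1 hg x t

theorem hasDerivAt_D2 (hg : ContDiff ℝ (⊤ : ℕ∞) (uncurry g)) (x t : ℝ) :
    HasDerivAt (fun t' => g x t') (D2 g x t) t := by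
  rw [D2_eq hg]; exact hasDerivAt_slice2 hg x t

theorem contDiff_D1 (hg : ContDiff ℝ (⊤ : ℕ∞) (uncurry g)) : ContDiff ℝ (⊤ : ℕ∞) (uncurry (D1 g)) := by
  have : uncurry (D1 g) = fun p : ℝ × ℝ => fderiv ℝ (uncurry g) p (1, 0) := by
    funext p
    exact D1_eq hg p.1 p.2
  rw [this]
  exact (hg.fderiv_right (by simp)).clm_apply contDiff_const

theorem contDiff_D2 (hg : ContDiff ℝ (⊤ : ℕ∞) (uncurry g)) : ContDiff ℝ (⊤ : ℕ∞) (uncurry (D2 g)) := by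
  have : uncurry (D2 g) = fun p : ℝ × ℝ => fderiv ℝ (uncurry g) p (0, 1) := by
    funext p
    exact D2_eq hg p.1 p.2
  rw [this]
  exact (hg.fderiv_right (by simp)).clm_apply contDiff_const

theorem D1_D2_comm (hg : ContDiff ℝ (⊤ : ℕ∞) (uncurry g)) (x t : ℝ) :
    D1 (D2 g) x t = D2 (D1 g) x t := by
  have hdf : ∀ y, HasFDerivAt (uncurry g) (fderiv ℝ (uncurry g) y) y :=
    fun y => (hg.differentiable (by simp) y).hasFDerivAt
  have hdf2 : HasFDerivAt (fderiv ℝ (uncurry g))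
      (fderiv ℝ (fderiv ℝ (uncurry g)) (x, t)) (x, t) :=
    (((hg.fderiv_right (m := (⊤ : ℕ∞)) (by simp)).differentiable (by simp)) (x, t)).hasFDerivAt
  have hsym := second_derivative_symmetric hdf hdf2 (0, 1) (1, 0)
  have e1 : D1 (D2 g) x t
      = fderiv ℝ (fderiv ℝ (uncurry g)) (x, t) (1, 0) (0, 1) := by
    rw [D1_eq (contDiff_D2 hg) x t]
    have : uncurry (D2 g) = fun p : ℝ × ℝ => fderiv ℝ (uncurry g) p (0, 1) := by
      funext p; exact D2_eq hg p.1 p.2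
    rw [this]
    rw [fderiv_clm_apply (hdf2.differentiableAt) (differentiableAt_const _)]
    simp
  have e2 : D2 (D1 g) x t
      = fderiv ℝ (fderiv ℝ (uncurry g)) (x, t) (0, 1) (1, 0) := by
    rw [D2_eq (contDiff_D1 hg) x t]
    have : uncurry (D1 g) = fun p : ℝ × ℝ => fderiv ℝ (uncurry g) p (1, 0) := by
      funext p; exact D1_eq hg p.1 p.2
    rw [this]
    rw [fderiv_clm_apply (hdf2.differentiableAt) (differentiableAt_const _)]
    simp
  rw [e1, e2, ← hsym]

/-- At an interior-or-boundary minimum on `Icc a b` with vanishing first derivative,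
the second derivative is nonnegative. -/
theorem snd_deriv_nonneg_of_isMinOn {f f' f'' : ℝ → ℝ} {a b x : ℝ}
    (hf : ∀ y, HasDerivAt f (f' y) y) (hf' : ∀ y, HasDerivAt f' (f'' y) y)
    (hab : a < b) (hx : x ∈ Icc a b) (hmin : IsMinOn f (Icc a b) x) (h0 : f' x = 0) :
    0 ≤ f'' x := by
  by_contra hneg
  push_neg at hneg
  have hcontf : Continuous f := by
    rw [continuous_iff_continuousAt]; exact fun y => (hf y).continuousAt
  have hslope : Tendsto (slope f' x) (𝓝[≠] x) (𝓝 (f'' x)) :=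
    hasDerivAt_iff_tendsto_slope.1 (hf' x)
  have hev : ∀ᶠ y in 𝓝[≠] x, slope f' x y < 0 :=
    hslope.eventually (Filter.Tendsto.eventually_lt_const hneg tendsto_id)
  rcases lt_or_ge x b with hxb | hbx
  · -- work to the right of x
    have hev' : ∀ᶠ y in 𝓝[>] x, slope f' x y < 0 :=
      hev.filter_mono (nhdsWithin_mono x fun y hy => ne_of_gt hy)
    obtain ⟨u, hu, hIoo⟩ := (nhdsGT_basis_of_exists_gt ⟨b, hxb⟩).eventually_iff.1 hev'
    set m := (x + min u b) / 2 with hm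
    have hxm : x < m := by
      have : x < min u b := lt_min hu hxb
      simp only [hm]; linarith
    have hmu : m < u := by
      have h1 : min u b ≤ u := min_le_left _ _
      have : x < min u b := lt_min hu hxb
      simp only [hm]; linarith
    have hmb : m ≤ b := by
      have h1 : min u b ≤ b := min_le_right _ _
      have : x < min u b := lt_min hu hxb
      simp only [hm]; linarith
    have hanti : StrictAntiOn f (Icc x m) := by
      apply strictAntiOn_of_deriv_neg (convex_Icc x m) (hcontf.continuousOn)
      intro y hy
      rw [interior_Icc] at hy
      have hy' : f' y < 0 := by
        have hs := hIoo ⟨hy.1, lt_trans hy.2 hmu⟩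
        have : slope f' x y = f' y / (y - x) := by
          rw [slope_def_field, h0]; ring
        rw [this] at hs
        by_contra hge
        push_neg at hge
        exact absurd hs (not_lt.2 (div_nonneg hge (by linarith [hy.1])))
      rw [(hf y).deriv]; exact hy'
    have : f m < f x := hanti ⟨le_refl x, le_of_lt hxm⟩ ⟨le_of_lt hxm, le_refl m⟩ hxm
    exact absurd (hmin ⟨le_trans hx.1 (le_of_lt hxm), hmb⟩) (not_le.2 this)
  · -- x = b, work to the left
    have hax : a < x := lt_of_lt_of_le hab hbx
    have hev' : ∀ᶠ y in 𝓝[<] x, slope f' x y < 0 :=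
      hev.filter_mono (nhdsWithin_mono x fun y hy => ne_of_lt hy)
    obtain ⟨u, hu, hIoo⟩ := (nhdsLT_basis_of_exists_lt ⟨a, hax⟩).eventually_iff.1 hev'
    set m := (x + max u a) / 2 with hm
    have hxm : m < x := by
      have : max u a < x := max_lt hu hax
      simp only [hm]; linarith
    have hmu : u < m := by
      have h1 : u ≤ max u a := le_max_left _ _
      have : max u a < x := max_lt hu hax
      simp only [hm]; linarith
    have hma : a ≤ m := by
      have h1 : a ≤ max u a := le_max_right _ _
      have : max u a < x := max_lt hu hax
      simp only [hm]; linarith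
    have hmono : StrictMonoOn f (Icc m x) := by
      apply strictMonoOn_of_deriv_pos (convex_Icc m x) (hcontf.continuousOn)
      intro y hy
      rw [interior_Icc] at hy
      have hy' : 0 < f' y := by
        have hs := hIoo ⟨lt_of_lt_of_le hmu (le_of_lt hy.1), hy.2⟩
        have : slope f' x y = f' y / (y - x) := by
          rw [slope_def_field, h0]; ring
        rw [this] at hs
        by_contra hge
        push_neg at hge
        have : 0 ≤ f' y / (y - x) := div_nonneg_iff.2 (Or.inr ⟨hge, by linarith [hy.2]⟩)
        exact absurd hs (not_lt.2 this)
      rw [(hf y).deriv]; exact hy'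
    have : f m < f x := hmono ⟨le_refl m, le_of_lt hxm⟩ ⟨le_of_lt hxm, le_refl x⟩ hxm
    exact absurd (hmin ⟨hma, le_trans hxm.le hx.2⟩) (not_le.2 this)

theorem snd_deriv_nonpos_of_isMaxOn {f f' f'' : ℝ → ℝ} {a b x : ℝ}
    (hf : ∀ y, HasDerivAt f (f' y) y) (hf' : ∀ y, HasDerivAt f' (f'' y) y)
    (hab : a < b) (hx : x ∈ Icc a b) (hmax : IsMaxOn f (Icc a b) x) (h0 : f' x = 0) :
    f'' x ≤ 0 := by
  have := snd_deriv_nonneg_of_isMinOn (f := fun y => -f y) (f' := fun y => -f' y)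
    (f'' := fun y => -f'' y) (fun y => (hf y).neg) (fun y => (hf' y).neg) hab hx
    (fun y hy => by simpa using hmax hy) (by simp [h0])
  simpa using this

/-- First derivative vanishes at a minimum attained at an interior point. -/
theorem deriv_eq_zero_of_isMinOn_interior {f : ℝ → ℝ} {c a b x : ℝ}
    (hf : HasDerivAt f c x) (hx : x ∈ Ioo a b) (hmin : IsMinOn f (Icc a b) x) : c = 0 :=
  (hmin.isLocalMin (Icc_mem_nhds hx.1 hx.2)).hasDerivAt_eq_zero hf

theorem deriv_eq_zero_of_isMaxOn_interior {f : ℝ → ℝ} {c a b x : ℝ}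
    (hf : HasDerivAt f c x) (hx : x ∈ Ioo a b) (hmax : IsMaxOn f (Icc a b) x) : c = 0 :=
  (hmax.isLocalMax (Icc_mem_nhds hx.1 hx.2)).hasDerivAt_eq_zero hf

/-- At a minimum over `Icc t0 t1` attained at `t* > t0`, the derivative is nonpositive. -/
theorem deriv_nonpos_of_isMinOn_right {f : ℝ → ℝ} {c t0 t1 t : ℝ}
    (hf : HasDerivAt f c t) (hmin : IsMinOn f (Icc t0 t1) t) (h0 : t0 < t) (h1 : t ≤ t1) :
    c ≤ 0 := by
  have hslope : Tendsto (slope f t) (𝓝[<] t) (𝓝 c) :=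
    (hasDerivAt_iff_tendsto_slope.1 hf).mono_left
      (nhdsWithin_mono t fun y hy => ne_of_lt hy)
  have hev : ∀ᶠ y in 𝓝[<] t, slope f t y ≤ 0 := by
    filter_upwards [Ioo_mem_nhdsLT_of_mem ⟨h0, le_refl t⟩] with y hy
    have hfy : f t ≤ f y := hmin ⟨hy.1.le, le_trans hy.2.le h1⟩
    rw [slope_def_field]
    apply div_nonpos_of_nonneg_of_nonpos (by linarith) (by linarith [hy.2])
  exact le_of_tendsto hslope hev

theorem deriv_nonneg_of_isMaxOn_right {f : ℝ → ℝ} {c t0 t1 t : ℝ}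
    (hf : HasDerivAt f c t) (hmax : IsMaxOn f (Icc t0 t1) t) (h0 : t0 < t) (h1 : t ≤ t1) :
    0 ≤ c := by
  have := deriv_nonpos_of_isMinOn_right (f := fun y => -f y) hf.neg
    (fun y hy => by simpa using hmax hy) h0 h1
  linarith

noncomputable def Phi (ρ : ℝ → ℝ → ℝ) (x t : ℝ) : ℝ := ρ x t * D2 ρ x t

noncomputable def PhiX (ρ : ℝ → ℝ → ℝ) (x t : ℝ) : ℝ :=
  D1 ρ x t * D2 ρ x t + ρ x t * D2 (D1 ρ) x t

noncomputable def PhiXX (ρ : ℝ → ℝ → ℝ) (x t : ℝ) : ℝ :=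
  D1 (D1 ρ) x t * D2 ρ x t + 2 * D1 ρ x t * D2 (D1 ρ) x t + ρ x t * D1 (D2 (D1 ρ)) x t

noncomputable def PhiT (ρ : ℝ → ℝ → ℝ) (x t : ℝ) : ℝ :=
  D2 ρ x t ^ 2 + ρ x t * D2 (D2 ρ) x t

noncomputable def Wfn (ρ : ℝ → ℝ → ℝ) (x t : ℝ) : ℝ := ρ x t ^ 2 * (1 + D1 ρ x t ^ 2)

noncomputable def WfnX (ρ : ℝ → ℝ → ℝ) (x t : ℝ) : ℝ :=
  2 * ρ x t * D1 ρ x t * (1 + D1 ρ x t ^ 2) + 2 * ρ x t ^ 2 * D1 ρ x t * D1 (D1 ρ) x t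

noncomputable def WfnXX (ρ : ℝ → ℝ → ℝ) (x t : ℝ) : ℝ :=
  2 * D1 ρ x t ^ 2 * (1 + D1 ρ x t ^ 2) + 2 * ρ x t * D1 (D1 ρ) x t * (1 + D1 ρ x t ^ 2)
    + 8 * ρ x t * D1 ρ x t ^ 2 * D1 (D1 ρ) x t + 2 * ρ x t ^ 2 * D1 (D1 ρ) x t ^ 2
    + 2 * ρ x t ^ 2 * D1 ρ x t * D1 (D1 (D1 ρ)) x t

noncomputable def WfnT (ρ : ℝ → ℝ → ℝ) (x t : ℝ) : ℝ :=
  2 * ρ x t * D2 ρ x t * (1 + D1 ρ x t ^ 2) + 2 * ρ x t ^ 2 * D1 ρ x t * D2 (D1 ρ) x t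

section derivs
variable {ρ : ℝ → ℝ → ℝ} (x t : ℝ)

theorem hasDerivAt_PhiX (hsm : ContDiff ℝ (⊤ : ℕ∞) (uncurry ρ)) : HasDerivAt (fun x' => Phi ρ x' t) (PhiX ρ x t) x := by
  have h := (hasDerivAt_D1 hsm x t).mul (hasDerivAt_D1 (contDiff_D2 hsm) x t)
  unfold Phi PhiX
  refine h.congr_deriv ?_
  rw [D1_D2_comm hsm x t]

theorem hasDerivAt_PhiXX (hsm : ContDiff ℝ (⊤ : ℕ∞) (uncurry ρ)) : HasDerivAt (fun x' => PhiX ρ x' t) (PhiXX ρ x t) x := by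
  have h := (((hasDerivAt_D1 (contDiff_D1 hsm) x t).mul
      (hasDerivAt_D1 (contDiff_D2 hsm) x t))).add
    ((hasDerivAt_D1 hsm x t).mul (hasDerivAt_D1 (contDiff_D2 (contDiff_D1 hsm)) x t))
  unfold PhiX PhiXX
  refine h.congr_deriv ?_
  rw [D1_D2_comm hsm x t]
  ring

theorem hasDerivAt_PhiT (hsm : ContDiff ℝ (⊤ : ℕ∞) (uncurry ρ)) : HasDerivAt (fun t' => Phi ρ x t') (PhiT ρ x t) t := by
  have h := (hasDerivAt_D2 hsm x t).mul (hasDerivAt_D2 (contDiff_D2 hsm) x t)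
  unfold Phi PhiT
  refine h.congr_deriv ?_
  ring

theorem hasDerivAt_WfnX (hsm : ContDiff ℝ (⊤ : ℕ∞) (uncurry ρ)) : HasDerivAt (fun x' => Wfn ρ x' t) (WfnX ρ x t) x := by
  have h := ((hasDerivAt_D1 hsm x t).pow 2).mul
    (((hasDerivAt_D1 (contDiff_D1 hsm) x t).pow 2).const_add 1)
  unfold Wfn WfnX
  refine h.congr_deriv ?_
  simp only [Pi.pow_apply, Pi.mul_apply]
  ring

theorem hasDerivAt_WfnXX (hsm : ContDiff ℝ (⊤ : ℕ∞) (uncurry ρ)) : HasDerivAt (fun x' => WfnX ρ x' t) (WfnXX ρ x t) x := by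
  have A := hasDerivAt_D1 hsm x t
  have B := hasDerivAt_D1 (contDiff_D1 hsm) x t
  have C := hasDerivAt_D1 (contDiff_D1 (contDiff_D1 hsm)) x t
  have h := (((A.const_mul 2).mul B).mul ((B.pow 2).const_add 1)).add
    ((((A.pow 2).const_mul 2).mul B).mul C)
  unfold WfnX WfnXX
  refine h.congr_deriv ?_
  simp only [Pi.pow_apply, Pi.mul_apply]
  ring

theorem hasDerivAt_WfnT (hsm : ContDiff ℝ (⊤ : ℕ∞) (uncurry ρ)) : HasDerivAt (fun t' => Wfn ρ x t') (WfnT ρ x t) t := by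
  have h := ((hasDerivAt_D2 hsm x t).pow 2).mul
    (((hasDerivAt_D2 (contDiff_D1 hsm) x t).pow 2).const_add 1)
  unfold Wfn WfnT
  refine h.congr_deriv ?_
  simp only [Pi.pow_apply, Pi.mul_apply]
  ring

end derivs
section identities
variable {ρ : ℝ → ℝ → ℝ} {a b T x t : ℝ}

/-- t-derivative of the PDE. -/
theorem pde_t (hsm : ContDiff ℝ (⊤ : ℕ∞) (uncurry ρ))
    (hpos : ∀ x ∈ Icc a b, ∀ t ∈ Ico (0:ℝ) T, 0 < ρ x t)
    (hpde : ∀ x ∈ Icc a b, ∀ t ∈ Ico (0:ℝ) T,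
      D2 ρ x t = D1 (D1 ρ) x t / (1 + D1 ρ x t ^ 2) - 1 / ρ x t)
    (hx : x ∈ Icc a b) (ht : t ∈ Ioo (0:ℝ) T) :
    D2 (D2 ρ) x t = (D1 (D2 (D1 ρ)) x t * (1 + D1 ρ x t ^ 2)
        - D1 (D1 ρ) x t * (2 * D1 ρ x t * D2 (D1 ρ) x t)) / (1 + D1 ρ x t ^ 2) ^ 2
      + D2 ρ x t / ρ x t ^ 2 := by
  have hρ : ρ x t ≠ 0 := ne_of_gt (hpos x hx t ⟨ht.1.le, ht.2⟩)
  have hX : (1 : ℝ) + D1 ρ x t ^ 2 ≠ 0 := by positivity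
  have hnum := hasDerivAt_D2 (contDiff_D1 (contDiff_D1 hsm)) x t
  have hden := ((hasDerivAt_D2 (contDiff_D1 hsm) x t).pow 2).const_add 1
  have hinv := (hasDerivAt_const t (1:ℝ)).div (hasDerivAt_D2 hsm x t) hρ
  have hg := (hnum.div hden hX).sub hinv
  have heq : (fun t' => D2 ρ x t')
      =ᶠ[nhds t] (fun t' => D1 (D1 ρ) x t' / (1 + D1 ρ x t' ^ 2) - 1 / ρ x t') := by
    filter_upwards [Ioo_mem_nhds ht.1 ht.2] with t' ht'
    exact hpde x hx t' ⟨ht'.1.le, ht'.2⟩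
  have h2 := hg.congr_of_eventuallyEq heq
  have h3 := (hasDerivAt_D2 (contDiff_D2 hsm) x t).unique h2
  rw [h3, D1_D2_comm (contDiff_D1 hsm) x t]
  simp only [Pi.pow_apply]
  have hρ2 : ρ x t ^ 2 ≠ 0 := pow_ne_zero 2 hρ
  field_simp
  ring

/-- x-derivative of the PDE (interior points). -/
theorem pde_x (hsm : ContDiff ℝ (⊤ : ℕ∞) (uncurry ρ))
    (hpos : ∀ x ∈ Icc a b, ∀ t ∈ Ico (0:ℝ) T, 0 < ρ x t)
    (hpde : ∀ x ∈ Icc a b, ∀ t ∈ Ico (0:ℝ) T,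
      D2 ρ x t = D1 (D1 ρ) x t / (1 + D1 ρ x t ^ 2) - 1 / ρ x t)
    (hx : x ∈ Ioo a b) (ht : t ∈ Ico (0:ℝ) T) :
    D2 (D1 ρ) x t = (D1 (D1 (D1 ρ)) x t * (1 + D1 ρ x t ^ 2)
        - D1 (D1 ρ) x t * (2 * D1 ρ x t * D1 (D1 ρ) x t)) / (1 + D1 ρ x t ^ 2) ^ 2
      + D1 ρ x t / ρ x t ^ 2 := by
  have hρ : ρ x t ≠ 0 := ne_of_gt (hpos x (Ioo_subset_Icc_self hx) t ht)
  have hX : (1 : ℝ) + D1 ρ x t ^ 2 ≠ 0 := by positivity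
  have hnum := hasDerivAt_D1 (contDiff_D1 (contDiff_D1 hsm)) x t
  have hden := ((hasDerivAt_D1 (contDiff_D1 hsm) x t).pow 2).const_add 1
  have hinv := (hasDerivAt_const x (1:ℝ)).div (hasDerivAt_D1 hsm x t) hρ
  have hg := (hnum.div hden hX).sub hinv
  have heq : (fun x' => D2 ρ x' t)
      =ᶠ[nhds x] (fun x' => D1 (D1 ρ) x' t / (1 + D1 ρ x' t ^ 2) - 1 / ρ x' t) := by
    filter_upwards [Ioo_mem_nhds hx.1 hx.2] with x' hx'
    exact hpde x' (Ioo_subset_Icc_self hx') t ht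
  have h2 := hg.congr_of_eventuallyEq heq
  have h3 := (hasDerivAt_D1 (contDiff_D2 hsm) x t).unique h2
  rw [← D1_D2_comm hsm x t, h3]
  simp only [Pi.pow_apply]
  have hρ2 : ρ x t ^ 2 ≠ 0 := pow_ne_zero 2 hρ
  field_simp
  ring

/-- The mixed derivative vanishes on the Neumann boundary. -/
theorem q_zero_boundary (hb : ∀ t' ∈ Ico (0:ℝ) T, D1 ρ x t' = 0)
    (ht : t ∈ Ioo (0:ℝ) T) : D2 (D1 ρ) x t = 0 := by
  have heq : (fun t' => D1 ρ x t') =ᶠ[nhds t] (fun _ => (0:ℝ)) := by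
    filter_upwards [Ioo_mem_nhds ht.1 ht.2] with t' ht'
    exact hb t' ⟨ht'.1.le, ht'.2⟩
  show deriv (fun t' => D1 ρ x t') t = 0
  rw [heq.deriv_eq]
  simp

end identities
section phiLower
variable {ρ : ℝ → ℝ → ℝ} {a b T : ℝ}

set_option maxHeartbeats 2000000 in
theorem phi_lower (hab : a < b) (hT : 0 < T) (hsm : ContDiff ℝ (⊤ : ℕ∞) (uncurry ρ))
    (hpos : ∀ x ∈ Icc a b, ∀ t ∈ Ico (0:ℝ) T, 0 < ρ x t)
    (hpde : ∀ x ∈ Icc a b, ∀ t ∈ Ico (0:ℝ) T,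
      D2 ρ x t = D1 (D1 ρ) x t / (1 + D1 ρ x t ^ 2) - 1 / ρ x t)
    (hneu : ∀ t ∈ Ico (0:ℝ) T, D1 ρ a t = 0 ∧ D1 ρ b t = 0) :
    ∃ C₁ : ℝ, 2 ≤ C₁ ∧ ∀ x ∈ Icc a b, ∀ t ∈ Ico (0:ℝ) T, -C₁ ≤ Phi ρ x t := by
  have hPhicont : Continuous (fun p : ℝ × ℝ => Phi ρ p.1 p.2) :=
    hsm.continuous.mul (contDiff_D2 hsm).continuous
  obtain ⟨x₀, hx₀m, hx₀min⟩ := isCompact_Icc.exists_isMinOn (nonempty_Icc.2 hab.le)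
    ((hPhicont.comp (continuous_id.prodMk continuous_const)).continuousOn :
      ContinuousOn (fun x => Phi ρ x 0) (Icc a b))
  set m := min (Phi ρ x₀ 0) (-2) with hmdef
  have claim : ∀ t₁ ∈ Ioo (0:ℝ) T, ∀ δ : ℝ, 0 < δ →
      ∀ x ∈ Icc a b, ∀ t ∈ Icc (0:ℝ) t₁, m ≤ Phi ρ x t + δ * t := by
    intro t₁ ht₁ δ hδ
    set g : ℝ × ℝ → ℝ := fun p => Phi ρ p.1 p.2 + δ * p.2 with hgdef
    have hgc : Continuous g := hPhicont.add (continuous_const.mul continuous_snd)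
    have hK : IsCompact (Icc a b ×ˢ Icc (0:ℝ) t₁) := isCompact_Icc.prod isCompact_Icc
    have hne : (Icc a b ×ˢ Icc (0:ℝ) t₁).Nonempty :=
      ⟨(a, 0), by simp [hab.le, ht₁.1.le]⟩
    obtain ⟨p, hpK, hmin⟩ := hK.exists_isMinOn hne hgc.continuousOn
    obtain ⟨hpx, hpt⟩ := Set.mem_prod.1 hpK
    suffices hs : m ≤ g p by
      intro x hx t ht
      exact le_trans hs (hmin (Set.mk_mem_prod hx ht))
    by_contra hlt
    push_neg at hlt
    have htpos : 0 < p.2 := by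
      by_contra hle
      push_neg at hle
      have h0 : p.2 = 0 := le_antisymm hle hpt.1
      have h1 : Phi ρ x₀ 0 ≤ Phi ρ p.1 0 := hx₀min hpx
      have h2 : g p = Phi ρ p.1 0 := by rw [hgdef]; simp [h0]
      have : m ≤ g p := by rw [h2]; exact le_trans (min_le_left _ _) h1
      exact absurd hlt (not_lt.2 this)
    have htT : p.2 < T := lt_of_le_of_lt hpt.2 ht₁.2
    have htIco : p.2 ∈ Ico (0:ℝ) T := ⟨hpt.1, htT⟩
    have hρpos : 0 < ρ p.1 p.2 := hpos p.1 hpx p.2 htIco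
    have hminx : IsMinOn (fun x => Phi ρ x p.2) (Icc a b) p.1 := by
      intro y hy
      have h := hmin (Set.mk_mem_prod hy hpt)
      simp only [Set.mem_setOf_eq, hgdef] at h ⊢
      linarith
    have hPhiX0 : PhiX ρ p.1 p.2 = 0 := by
      rcases eq_or_lt_of_le hpx.1 with hxa | hxa
      · have hv : D1 ρ p.1 p.2 = 0 := by rw [← hxa]; exact (hneu p.2 htIco).1
        have hq : D2 (D1 ρ) p.1 p.2 = 0 := by
          rw [← hxa]
          exact q_zero_boundary (fun t' ht' => (hneu t' ht').1) ⟨htpos, htT⟩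
        unfold PhiX; rw [hv, hq]; ring
      rcases eq_or_lt_of_le hpx.2 with hxb | hxb
      · have hv : D1 ρ p.1 p.2 = 0 := by rw [hxb]; exact (hneu p.2 htIco).2
        have hq : D2 (D1 ρ) p.1 p.2 = 0 := by
          rw [hxb]
          exact q_zero_boundary (fun t' ht' => (hneu t' ht').2) ⟨htpos, htT⟩
        unfold PhiX; rw [hv, hq]; ring
      · exact deriv_eq_zero_of_isMinOn_interior (hasDerivAt_PhiX p.1 p.2 hsm)
          ⟨hxa, hxb⟩ hminx
    have hPhiXX0 : 0 ≤ PhiXX ρ p.1 p.2 :=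
      snd_deriv_nonneg_of_isMinOn (f := fun y => Phi ρ y p.2)
        (f' := fun y => PhiX ρ y p.2) (f'' := fun y => PhiXX ρ y p.2)
        (fun y => hasDerivAt_PhiX y p.2 hsm)
        (fun y => hasDerivAt_PhiXX y p.2 hsm) hab hpx hminx hPhiX0
    have hmint : IsMinOn (fun t => Phi ρ p.1 t + δ * t) (Icc 0 t₁) p.2 := by
      intro y hy
      have h := hmin (Set.mk_mem_prod hpx hy)
      simpa [hgdef] using h
    have hderT : HasDerivAt (fun t => Phi ρ p.1 t + δ * t) (PhiT ρ p.1 p.2 + δ) p.2 :=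
      (hasDerivAt_PhiT p.1 p.2 hsm).add (by simpa using (hasDerivAt_id p.2).const_mul δ)
    have hPhiTle : PhiT ρ p.1 p.2 + δ ≤ 0 :=
      deriv_nonpos_of_isMinOn_right hderT hmint htpos hpt.2
    have hPhival : Phi ρ p.1 p.2 < -2 := by
      have h2 : m ≤ -2 := min_le_right _ _
      have h3 : g p = Phi ρ p.1 p.2 + δ * p.2 := rfl
      nlinarith [mul_pos hδ htpos]
    -- algebra
    set R := ρ p.1 p.2 with hR
    set v := D1 ρ p.1 p.2 with hv
    set w := D1 (D1 ρ) p.1 p.2 with hw0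
    set s := D2 ρ p.1 p.2 with hs0
    set Q := D2 (D1 ρ) p.1 p.2 with hQ0
    set DQ := D1 (D2 (D1 ρ)) p.1 p.2 with hDQ0
    set s2 := D2 (D2 ρ) p.1 p.2 with hs20
    have hE : s = w / (1 + v ^ 2) - 1 / R := hpde p.1 hpx p.2 htIco
    have hEt : s2 = (DQ * (1 + v ^ 2) - w * (2 * v * Q)) / (1 + v ^ 2) ^ 2 + s / R ^ 2 :=
      pde_t hsm hpos hpde hpx ⟨htpos, htT⟩
    have hRne : R ≠ 0 := ne_of_gt hρpos
    have hXpos : (0:ℝ) < 1 + v ^ 2 := by positivity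
    have hPX : v * s + R * Q = 0 := hPhiX0
    have hPXX : 0 ≤ w * s + 2 * v * Q + R * DQ := hPhiXX0
    have hPT : s ^ 2 + R * s2 ≤ -δ := by
      have : PhiT ρ p.1 p.2 = s ^ 2 + R * s2 := rfl
      linarith [hPhiTle, this]
    have hPv : R * s < -2 := hPhival
    have hweq : w = (s + 1 / R) * (1 + v ^ 2) := by
      have h1 : w / (1 + v ^ 2) = s + 1 / R := by rw [hE]; ring
      rw [← h1, div_mul_cancel₀ _ (ne_of_gt hXpos)]
    have hQeq : Q = -(v * s) / R := by
      rw [eq_div_iff hRne]; linear_combination hPX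
    have key : s ^ 2 + R * s2
        = (w * s + 2 * v * Q + R * DQ) / (1 + v ^ 2)
          + 2 * v ^ 2 * (R * s) * (R * s + 2) / (R ^ 2 * (1 + v ^ 2)) := by
      rw [hEt, hweq, hQeq]
      field_simp
      ring
    have hterm1 : 0 ≤ (w * s + 2 * v * Q + R * DQ) / (1 + v ^ 2) :=
      div_nonneg hPXX hXpos.le
    have hterm2 : 0 ≤ 2 * v ^ 2 * (R * s) * (R * s + 2) / (R ^ 2 * (1 + v ^ 2)) := by
      apply div_nonneg _ (by positivity)
      have h1 : R * s + 2 < 0 := by linarith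
      have h2 : 2 * v ^ 2 * (R * s) ≤ 0 := by nlinarith [sq_nonneg v]
      nlinarith [mul_nonneg (neg_nonneg.2 h2) (by linarith : (0:ℝ) ≤ -(R * s + 2))]
    linarith
  refine ⟨-m, ?_, ?_⟩
  · have : m ≤ -2 := min_le_right _ _
    linarith
  · intro x hx t ht
    rw [neg_neg]
    have hεgen : ∀ ε : ℝ, 0 < ε → m ≤ Phi ρ x t + ε := by
      intro ε hε
      set t₁ := (t + T) / 2 with ht₁def
      have ht₁ : t₁ ∈ Ioo (0:ℝ) T := by
        constructor
        · simp only [ht₁def]; linarith [ht.1, hT]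
        · simp only [ht₁def]; linarith [ht.2]
      have hδ : 0 < ε / (t + 1) := by
        apply div_pos hε; linarith [ht.1]
      have h1 := claim t₁ ht₁ (ε / (t + 1)) hδ x hx t
        ⟨ht.1, by simp only [ht₁def]; linarith [ht.2]⟩
      have h2 : ε / (t + 1) * t ≤ ε := by
        rw [div_mul_eq_mul_div, div_le_iff₀ (by linarith [ht.1] : (0:ℝ) < t + 1)]
        nlinarith [ht.1]
      linarith
    by_contra hlt
    push_neg at hlt
    have := hεgen ((m - Phi ρ x t) / 2) (by linarith)
    linarith

end phiLower
section wUpper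
variable {ρ : ℝ → ℝ → ℝ} {a b T : ℝ}

set_option maxHeartbeats 2000000 in
theorem w_upper (hab : a < b) (hT : 0 < T) (hsm : ContDiff ℝ (⊤ : ℕ∞) (uncurry ρ))
    (hpos : ∀ x ∈ Icc a b, ∀ t ∈ Ico (0:ℝ) T, 0 < ρ x t)
    (hpde : ∀ x ∈ Icc a b, ∀ t ∈ Ico (0:ℝ) T,
      D2 ρ x t = D1 (D1 ρ) x t / (1 + D1 ρ x t ^ 2) - 1 / ρ x t)
    (hneu : ∀ t ∈ Ico (0:ℝ) T, D1 ρ a t = 0 ∧ D1 ρ b t = 0) :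
    ∃ C₂ : ℝ, 0 < C₂ ∧ ∀ x ∈ Icc a b, ∀ t ∈ Ico (0:ℝ) T, Wfn ρ x t ≤ C₂ := by
  have hWcont : Continuous (fun p : ℝ × ℝ => Wfn ρ p.1 p.2) := by
    have h1 : Continuous (fun p : ℝ × ℝ => ρ p.1 p.2) := hsm.continuous
    have h2 : Continuous (fun p : ℝ × ℝ => D1 ρ p.1 p.2) := (contDiff_D1 hsm).continuous
    exact (h1.pow 2).mul (continuous_const.add (h2.pow 2))
  obtain ⟨x₀, hx₀m, hx₀max⟩ := isCompact_Icc.exists_isMaxOn (nonempty_Icc.2 hab.le)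
    ((hWcont.comp (continuous_id.prodMk continuous_const)).continuousOn :
      ContinuousOn (fun x => Wfn ρ x 0) (Icc a b))
  set M := Wfn ρ x₀ 0 with hMdef
  have hMpos : 0 < M := by
    have h1 : 0 < Wfn ρ a 0 := by
      have := hpos a ⟨le_refl a, hab.le⟩ 0 ⟨le_refl 0, hT⟩
      unfold Wfn; positivity
    exact lt_of_lt_of_le h1 (hx₀max ⟨le_refl a, hab.le⟩)
  have claim : ∀ t₁ ∈ Ioo (0:ℝ) T, ∀ x ∈ Icc a b, ∀ t ∈ Icc (0:ℝ) t₁,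
      Wfn ρ x t ≤ M := by
    intro t₁ ht₁
    have hK : IsCompact (Icc a b ×ˢ Icc (0:ℝ) t₁) := isCompact_Icc.prod isCompact_Icc
    have hne : (Icc a b ×ˢ Icc (0:ℝ) t₁).Nonempty :=
      ⟨(a, 0), by simp [hab.le, ht₁.1.le]⟩
    obtain ⟨p, hpK, hmax⟩ := hK.exists_isMaxOn hne hWcont.continuousOn
    obtain ⟨hpx, hpt⟩ := Set.mem_prod.1 hpK
    suffices hs : Wfn ρ p.1 p.2 ≤ M by
      intro x hx t ht
      exact le_trans (hmax (Set.mk_mem_prod hx ht)) hs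
    by_contra hlt
    push_neg at hlt
    have htpos : 0 < p.2 := by
      by_contra hle
      push_neg at hle
      have h0 : p.2 = 0 := le_antisymm hle hpt.1
      have h1 : Wfn ρ p.1 0 ≤ M := hx₀max hpx
      rw [← h0] at h1
      exact absurd hlt (not_lt.2 h1)
    have htT : p.2 < T := lt_of_le_of_lt hpt.2 ht₁.2
    have htIco : p.2 ∈ Ico (0:ℝ) T := ⟨hpt.1, htT⟩
    have hρpos : 0 < ρ p.1 p.2 := hpos p.1 hpx p.2 htIco
    have hmaxx : IsMaxOn (fun x => Wfn ρ x p.2) (Icc a b) p.1 := by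
      intro y hy
      exact hmax (Set.mk_mem_prod hy hpt)
    set R := ρ p.1 p.2 with hR
    set v := D1 ρ p.1 p.2 with hv0
    set w := D1 (D1 ρ) p.1 p.2 with hw0
    set s := D2 ρ p.1 p.2 with hs0
    set Q := D2 (D1 ρ) p.1 p.2 with hQ0
    set w3 := D1 (D1 (D1 ρ)) p.1 p.2 with hw30
    have hE : s = w / (1 + v ^ 2) - 1 / R := hpde p.1 hpx p.2 htIco
    have hRne : R ≠ 0 := ne_of_gt hρpos
    have hXpos : (0:ℝ) < 1 + v ^ 2 := by positivity
    have hmaxt : IsMaxOn (fun t => Wfn ρ p.1 t) (Icc 0 t₁) p.2 := by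
      intro y hy
      exact hmax (Set.mk_mem_prod hpx hy)
    have hWT : 0 ≤ WfnT ρ p.1 p.2 :=
      deriv_nonneg_of_isMaxOn_right (hasDerivAt_WfnT p.1 p.2 hsm) hmaxt htpos hpt.2
    have hWTval : 0 ≤ 2 * R * s * (1 + v ^ 2) + 2 * R ^ 2 * v * Q := hWT
    by_cases hvz : v = 0
    · have hWX0 : WfnX ρ p.1 p.2 = 0 := by
        show 2 * R * v * (1 + v ^ 2) + 2 * R ^ 2 * v * w = 0
        rw [hvz]; ring
      have hWXX : WfnXX ρ p.1 p.2 ≤ 0 :=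
        snd_deriv_nonpos_of_isMaxOn (f := fun y => Wfn ρ y p.2)
          (f' := fun y => WfnX ρ y p.2) (f'' := fun y => WfnXX ρ y p.2)
          (fun y => hasDerivAt_WfnX y p.2 hsm)
          (fun y => hasDerivAt_WfnXX y p.2 hsm) hab hpx hmaxx hWX0
      have hXXval : 2 * v ^ 2 * (1 + v ^ 2) + 2 * R * w * (1 + v ^ 2)
          + 8 * R * v ^ 2 * w + 2 * R ^ 2 * w ^ 2 + 2 * R ^ 2 * v * w3 ≤ 0 := hWXX
      rw [hvz] at hXXval hWTval hE
      have hRw : R * w ≤ 0 := by nlinarith [sq_nonneg (R * w)]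
      have hRs : R * s = R * w - 1 := by
        rw [hE]; field_simp; ring
      nlinarith
    · have hxint : p.1 ∈ Ioo a b := by
        rcases eq_or_lt_of_le hpx.1 with hxa | hxa
        · exact absurd (by rw [hv0, ← hxa]; exact (hneu p.2 htIco).1) hvz
        rcases eq_or_lt_of_le hpx.2 with hxb | hxb
        · exact absurd (by rw [hv0, hxb]; exact (hneu p.2 htIco).2) hvz
        · exact ⟨hxa, hxb⟩
      have hEx : Q = (w3 * (1 + v ^ 2) - w * (2 * v * w)) / (1 + v ^ 2) ^ 2 + v / R ^ 2 :=
        pde_x hsm hpos hpde hxint htIco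
      have hWX0 : WfnX ρ p.1 p.2 = 0 :=
        deriv_eq_zero_of_isMaxOn_interior (hasDerivAt_WfnX p.1 p.2 hsm) hxint hmaxx
      have hWXval : 2 * R * v * (1 + v ^ 2) + 2 * R ^ 2 * v * w = 0 := hWX0
      have hWXX : WfnXX ρ p.1 p.2 ≤ 0 :=
        snd_deriv_nonpos_of_isMaxOn (f := fun y => Wfn ρ y p.2)
          (f' := fun y => WfnX ρ y p.2) (f'' := fun y => WfnXX ρ y p.2)
          (fun y => hasDerivAt_WfnX y p.2 hsm)
          (fun y => hasDerivAt_WfnXX y p.2 hsm) hab hpx hmaxx hWX0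
      have hXXval : 2 * v ^ 2 * (1 + v ^ 2) + 2 * R * w * (1 + v ^ 2)
          + 8 * R * v ^ 2 * w + 2 * R ^ 2 * w ^ 2 + 2 * R ^ 2 * v * w3 ≤ 0 := hWXX
      have hRw : R * w = -(1 + v ^ 2) := by
        have h2 : 2 * R * v * ((1 + v ^ 2) + R * w) = 0 := by linear_combination hWXval
        have h3 : (1 + v ^ 2) + R * w = 0 := by
          rcases mul_eq_zero.1 h2 with h | h
          · exfalso
            rcases mul_eq_zero.1 h with h' | h'
            · rcases mul_eq_zero.1 h' with h'' | h''
              · norm_num at h''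
              · exact hRne h''
            · exact hvz h'
          · exact h
        linarith
      have h111 : 2 * R ^ 2 * v * w3 ≤ 6 * v ^ 2 * (1 + v ^ 2) := by
        have e : 2 * v ^ 2 * (1 + v ^ 2) + 2 * R * w * (1 + v ^ 2)
            + 8 * R * v ^ 2 * w + 2 * R ^ 2 * w ^ 2 + 2 * R ^ 2 * v * w3
            = 2 * v ^ 2 * (1 + v ^ 2) + 2 * (R * w) * (1 + v ^ 2)
            + 8 * v ^ 2 * (R * w) + 2 * (R * w) ^ 2 + 2 * R ^ 2 * v * w3 := by ring
        rw [e, hRw] at hXXval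
        nlinarith [hXXval]
      have hweq : w = -(1 + v ^ 2) / R := by
        rw [eq_div_iff hRne]; linear_combination hRw
      have hseq : s = -2 / R := by
        rw [hE, hweq]
        field_simp
        ring
      have hTval : 2 * R * s * (1 + v ^ 2) + 2 * R ^ 2 * v * Q
          = -4 * (1 + v ^ 2) - 2 * v ^ 2 + 2 * R ^ 2 * v * w3 / (1 + v ^ 2) := by
        rw [hEx, hweq, hseq]
        field_simp
        ring
      have hdiv : 2 * R ^ 2 * v * w3 / (1 + v ^ 2) ≤ 6 * v ^ 2 := by
        rw [div_le_iff₀ hXpos]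
        nlinarith [h111]
      nlinarith [hWTval, hTval, hdiv]
  refine ⟨M, hMpos, ?_⟩
  intro x hx t ht
  set t₁ := (t + T) / 2 with ht₁def
  have ht₁ : t₁ ∈ Ioo (0:ℝ) T := by
    constructor
    · simp only [ht₁def]; linarith [ht.1, hT]
    · simp only [ht₁def]; linarith [ht.2]
  exact claim t₁ ht₁ x hx t ⟨ht.1, by simp only [ht₁def]; linarith [ht.2]⟩

end wUpper

/-- Absolute Curvature Estimate: at any point where H ≥ 0 or |H| ≤ c,
one has |k|/p ≤ C with C depending only on c and the initial hypersurface. -/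
theorem absolute_curvature_estimate (a b T : ℝ) (ρ : ℝ → ℝ → ℝ)
    (hflow : IsAxisymMCF a b T ρ) (c : ℝ) (hc : 0 < c) :
    ∃ C > (0 : ℝ), ∀ x₀ ∈ Icc a b, ∀ t₀ ∈ Ico (0 : ℝ) T,
      (0 ≤ meanH ρ x₀ t₀ ∨ |meanH ρ x₀ t₀| ≤ c) →
      |curvK ρ x₀ t₀| / curvP ρ x₀ t₀ ≤ C := by
  obtain ⟨hab, hT, hsm, hpos, hpde, hneu⟩ := hflow
  have hpde' : ∀ x ∈ Icc a b, ∀ t ∈ Ico (0:ℝ) T,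
      D2 ρ x t = D1 (D1 ρ) x t / (1 + D1 ρ x t ^ 2) - 1 / ρ x t := hpde
  have hneu' : ∀ t ∈ Ico (0:ℝ) T, D1 ρ a t = 0 ∧ D1 ρ b t = 0 := hneu
  obtain ⟨C₁, hC₁, hPhi⟩ := phi_lower hab hT hsm hpos hpde' hneu'
  obtain ⟨C₂, hC₂, hW⟩ := w_upper hab hT hsm hpos hpde' hneu'
  refine ⟨max (max 1 (C₁ - 1)) (c * Real.sqrt C₂ + 1), ?_, ?_⟩
  · exact lt_of_lt_of_le one_pos (le_trans (le_max_left 1 (C₁ - 1)) (le_max_left _ _))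
  intro x₀ hx₀ t₀ ht₀ hcond
  have hRpos : 0 < ρ x₀ t₀ := hpos x₀ hx₀ t₀ ht₀
  have hRne : ρ x₀ t₀ ≠ 0 := ne_of_gt hRpos
  have hX : (0:ℝ) < 1 + rhoX ρ x₀ t₀ ^ 2 := by positivity
  have hsq : 0 < Real.sqrt (1 + rhoX ρ x₀ t₀ ^ 2) := Real.sqrt_pos.2 hX
  have hppos : 0 < curvP ρ x₀ t₀ := by
    unfold curvP
    positivity
  have hX32 : (1 + rhoX ρ x₀ t₀ ^ 2) ^ ((3:ℝ)/2)
      = (1 + rhoX ρ x₀ t₀ ^ 2) * Real.sqrt (1 + rhoX ρ x₀ t₀ ^ 2) := by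
    rw [show ((3:ℝ)/2) = 1 + 1/2 by norm_num, Real.rpow_add hX, Real.rpow_one,
      ← Real.sqrt_eq_rpow]
  have hE : rhoT ρ x₀ t₀ = rhoXX ρ x₀ t₀ / (1 + rhoX ρ x₀ t₀ ^ 2) - 1 / ρ x₀ t₀ :=
    hpde x₀ hx₀ t₀ ht₀
  have hRw : ρ x₀ t₀ * rhoXX ρ x₀ t₀ / (1 + rhoX ρ x₀ t₀ ^ 2)
      = ρ x₀ t₀ * rhoT ρ x₀ t₀ + 1 := by
    rw [hE]
    field_simp
    ring
  have hkp : curvK ρ x₀ t₀ = -(ρ x₀ t₀ * rhoT ρ x₀ t₀ + 1) * curvP ρ x₀ t₀ := by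
    rw [← hRw]
    unfold curvK curvP
    rw [hX32]
    field_simp
  have hkabs : |curvK ρ x₀ t₀| = |ρ x₀ t₀ * rhoT ρ x₀ t₀ + 1| * curvP ρ x₀ t₀ := by
    rw [hkp, abs_mul, abs_neg, abs_of_pos hppos]
  have hgoal : |curvK ρ x₀ t₀| / curvP ρ x₀ t₀ = |ρ x₀ t₀ * rhoT ρ x₀ t₀ + 1| := by
    rw [hkabs, mul_div_assoc, div_self (ne_of_gt hppos), mul_one]
  rw [hgoal]
  have hH : meanH ρ x₀ t₀ = -(ρ x₀ t₀ * rhoT ρ x₀ t₀) * curvP ρ x₀ t₀ := by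
    unfold meanH
    rw [hkp]
    ring
  have hPhiLow : -C₁ ≤ ρ x₀ t₀ * rhoT ρ x₀ t₀ := hPhi x₀ hx₀ t₀ ht₀
  rcases hcond with hpos' | habs'
  · -- H ≥ 0 : then ρ ρₜ ≤ 0
    have hRs : ρ x₀ t₀ * rhoT ρ x₀ t₀ ≤ 0 := by
      rw [hH] at hpos'
      nlinarith [hppos]
    refine le_trans ?_ (le_max_left _ _)
    refine abs_le.2 ⟨?_, ?_⟩
    · have h1 : -(C₁ - 1) ≤ ρ x₀ t₀ * rhoT ρ x₀ t₀ + 1 := by linarith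
      have h2 : -(max 1 (C₁ - 1)) ≤ -(C₁ - 1) := neg_le_neg (le_max_right _ _)
      linarith
    · exact le_trans (by linarith) (le_max_left 1 (C₁ - 1))
  · -- |H| ≤ c
    have h1 : |ρ x₀ t₀ * rhoT ρ x₀ t₀| * curvP ρ x₀ t₀ ≤ c := by
      rw [hH] at habs'
      rwa [abs_mul, abs_neg, abs_of_pos hppos] at habs'
    have hpm : 0 < ρ x₀ t₀ * Real.sqrt (1 + rhoX ρ x₀ t₀ ^ 2) := by positivity
    have hcurvP : curvP ρ x₀ t₀ = 1 / (ρ x₀ t₀ * Real.sqrt (1 + rhoX ρ x₀ t₀ ^ 2)) := rfl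
    have h2 : |ρ x₀ t₀ * rhoT ρ x₀ t₀| ≤ c * (ρ x₀ t₀ * Real.sqrt (1 + rhoX ρ x₀ t₀ ^ 2)) := by
      rw [hcurvP, mul_one_div] at h1
      exact (div_le_iff₀ hpm).1 h1
    have h3 : ρ x₀ t₀ * Real.sqrt (1 + rhoX ρ x₀ t₀ ^ 2) ≤ Real.sqrt C₂ := by
      have e : ρ x₀ t₀ * Real.sqrt (1 + rhoX ρ x₀ t₀ ^ 2)
          = Real.sqrt (ρ x₀ t₀ ^ 2 * (1 + rhoX ρ x₀ t₀ ^ 2)) := by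
        rw [Real.sqrt_mul (sq_nonneg _), Real.sqrt_sq hRpos.le]
      rw [e]
      exact Real.sqrt_le_sqrt (hW x₀ hx₀ t₀ ht₀)
    have h4 : |ρ x₀ t₀ * rhoT ρ x₀ t₀| ≤ c * Real.sqrt C₂ :=
      le_trans h2 (mul_le_mul_of_nonneg_left h3 hc.le)
    refine le_trans ?_ (le_max_right (max 1 (C₁ - 1)) _)
    calc |ρ x₀ t₀ * rhoT ρ x₀ t₀ + 1| ≤ |ρ x₀ t₀ * rhoT ρ x₀ t₀| + 1 := by
          exact le_trans (abs_add_le _ _) (by simp)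
      _ ≤ c * Real.sqrt C₂ + 1 := by linarith
end

section
/- (Non-Cylindrical Maximum Principle, scalar version) Let T > 0 and let V be a nonempty open subset of ℝ × (0,T) whose closure V̄ is compact. Define the parabolic boundary Γ_V := (V̄ \ V) \ (ℝ × {T}). Let f : ℝ × ℝ → ℝ be continuous on V̄, and suppose that at every point (x,t) ∈ V the partial derivatives ∂ₜf, ∂ₓf, ∂ₓₓf exist and satisfy ∂ₜf(x,t) − ∂ₓₓf(x,t) ≤ α(x,t)·∂ₓf(x,t) for some function α : ℝ × ℝ → ℝ that is continuous on V. Then sup_V f ≤ sup_{Γ_V} f. -/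
/-! Perturb `f` to `f - ε t`. On the compact set `closure V ∩ {t ≤ s}`, with `s < T`, it attains
its maximum at some `q`. Were `q ∈ V`, the maximum would force `∂ₓf q = 0` and `∂ₓₓf q ≤ 0` in space,
and `∂ₜf q ≥ ε` in time (only earlier times compete, so the time derivative is controlled from the
left), whence `∂ₜf - ∂ₓₓf ≥ ε > 0 = α ∂ₓf` at `q`, contradicting the differential inequality.
So `q` lies on the parabolic boundary, and `ε → 0` gives the claim. -/

open Set Filter Topology

lemma HasDerivAt.nonneg_of_eventually_le_left {h : ℝ → ℝ} {a d : ℝ} (hd : HasDerivAt h d a)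
    (hle : ∀ᶠ t in 𝓝[<] a, h t ≤ h a) : 0 ≤ d := by
  refine ge_of_tendsto ((hasDerivAt_iff_tendsto_slope.mp hd).mono_left (nhdsLT_le_nhdsNE a)) ?_
  filter_upwards [hle, self_mem_nhdsWithin] with t ht (hta : t < a)
  rw [slope_def_field]
  exact div_nonneg_of_nonpos (sub_nonpos.mpr ht) (sub_nonpos.mpr hta.le)

lemma IsLocalMax.nonpos_of_hasDerivAt_deriv {u u' : ℝ → ℝ} {a c : ℝ} (hmax : IsLocalMax u a)
    (hu : ∀ᶠ x in 𝓝 a, HasDerivAt u (u' x) x) (hu' : HasDerivAt u' c a) : c ≤ 0 := by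
  by_contra! hc
  have hu'a : u' a = 0 := hmax.hasDerivAt_eq_zero hu.self_of_nhds
  have hslope : ∀ᶠ x in 𝓝 a, x ≠ a → 0 < slope u' a x :=
    eventually_nhdsWithin_iff.mp
      ((hasDerivAt_iff_tendsto_slope.mp hu').eventually (eventually_gt_nhds hc))
  obtain ⟨l, b, ⟨hla, hab⟩, hsub⟩ :=
    mem_nhds_iff_exists_Ioo_subset.mp (hslope.and (hmax.and hu))
  have hIco : Ico a b ⊆ Ioo l b := Ico_subset_Ioo_left hla
  -- `u' > 0` just to the right of `a`, so `u` increases there, against the maximum at `a`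
  have hmono : StrictMonoOn u (Ico a b) := by
    refine strictMonoOn_of_hasDerivWithinAt_pos (f' := u') (convex_Ico a b)
      (fun x hx => (hsub (hIco hx)).2.2.continuousAt.continuousWithinAt) (fun x hx => ?_)
      (fun x hx => ?_) <;> rw [interior_Ico] at hx
    · exact (hsub (hIco (Ioo_subset_Ico_self hx))).2.2.hasDerivWithinAt
    · exact pos_of_slope_pos hx.1 ((hsub (hIco (Ioo_subset_Ico_self hx))).1 hx.1.ne') hu'a
  obtain ⟨m, ham, hmb⟩ := exists_between hab
  exact (hmono ⟨le_rfl, hab⟩ ⟨ham.le, hmb⟩ ham).not_ge (hsub (hIco ⟨ham.le, hmb⟩)).2.1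

def parabolicBoundary (V : Set (ℝ × ℝ)) (T : ℝ) : Set (ℝ × ℝ) :=
  (closure V \ V) \ {q | q.2 = T}

section

variable {V : Set (ℝ × ℝ)} {f ft fx fxx : ℝ × ℝ → ℝ}

lemma fx_eq_zero_and_add_fxx_le_ft_of_isMaxOn {q : ℝ × ℝ} {ε : ℝ} (hV : V ∈ 𝓝 q)
    (hderiv : ∀ p ∈ V,
      HasDerivAt (fun t => f (p.1, t)) (ft p) p.2 ∧
      HasDerivAt (fun x => f (x, p.2)) (fx p) p.1 ∧
      HasDerivAt (fun x => fx (x, p.2)) (fxx p) p.1)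
    (hmax : IsMaxOn (fun p => f p - ε * p.2) (V ∩ {p | p.2 ≤ q.2}) q) :
    fx q = 0 ∧ ε + fxx q ≤ ft q := by
  obtain ⟨hft, hfx, hfxx⟩ := hderiv q (mem_of_mem_nhds hV)
  have hrow : ∀ᶠ x in 𝓝 q.1, (x, q.2) ∈ V :=
    (continuous_id.prodMk continuous_const).continuousAt.preimage_mem_nhds hV
  have hcol : ∀ᶠ t in 𝓝 q.2, (q.1, t) ∈ V :=
    (continuous_const.prodMk continuous_id).continuousAt.preimage_mem_nhds hV
  have hspace : IsLocalMax (fun x => f (x, q.2)) q.1 := hrow.mono fun x hx => by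
    simpa using hmax ⟨hx, show q.2 ≤ q.2 from le_rfl⟩
  have htime : ε ≤ ft q := by
    have hd := hft.sub ((hasDerivAt_id q.2).const_mul ε)
    rw [mul_one] at hd
    refine sub_nonneg.mp (hd.nonneg_of_eventually_le_left ?_)
    filter_upwards [nhdsWithin_le_nhds hcol, self_mem_nhdsWithin] with t ht (htq : t < q.2)
    simpa using hmax ⟨ht, htq.le⟩
  have hconcave : fxx q ≤ 0 :=
    hspace.nonpos_of_hasDerivAt_deriv (hrow.mono fun x hx => (hderiv _ hx).2.1) hfxx
  exact ⟨hspace.hasDerivAt_eq_zero hfx, by linarith⟩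

lemma exists_mem_parabolicBoundary_sub_mul_le {T : ℝ} {α : ℝ × ℝ → ℝ} (hVopen : IsOpen V)
    (hVsub : V ⊆ (univ : Set ℝ) ×ˢ Ioo (0 : ℝ) T) (hVcpt : IsCompact (closure V))
    (hf : ContinuousOn f (closure V))
    (hderiv : ∀ p ∈ V,
      HasDerivAt (fun t => f (p.1, t)) (ft p) p.2 ∧
      HasDerivAt (fun x => f (x, p.2)) (fx p) p.1 ∧
      HasDerivAt (fun x => fx (x, p.2)) (fxx p) p.1 ∧
      ft p - fxx p ≤ α p * fx p)
    {p : ℝ × ℝ} (hp : p ∈ V) {ε : ℝ} (hε : 0 < ε) :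
    ∃ q ∈ parabolicBoundary V T, f p - ε * p.2 ≤ f q := by
  -- cut off below time `T`, where the closure of `V` may meet the top of the slab
  obtain ⟨s, hps, hsT⟩ := exists_between (hVsub hp).2.2
  have hK : IsCompact (closure V ∩ {q | q.2 ≤ s}) :=
    hVcpt.inter_right (isClosed_le continuous_snd continuous_const)
  have hg : ContinuousOn (fun q : ℝ × ℝ => f q - ε * q.2) (closure V ∩ {q | q.2 ≤ s}) :=
    (hf.mono inter_subset_left).sub (by fun_prop)
  obtain ⟨q, ⟨hqV, hqs⟩, hmax⟩ := hK.exists_isMaxOn ⟨p, subset_closure hp, hps.le⟩ hg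
  have hqnV : q ∉ V := by
    intro hq
    obtain ⟨hfx, hft⟩ := fx_eq_zero_and_add_fxx_le_ft_of_isMaxOn (hVopen.mem_nhds hq)
      (fun r hr => ⟨(hderiv r hr).1, (hderiv r hr).2.1, (hderiv r hr).2.2.1⟩)
      (hmax.on_subset fun r ⟨hrV, hrq⟩ => ⟨subset_closure hrV, show r.2 ≤ s from hrq.trans hqs⟩)
    have hineq := (hderiv q hq).2.2.2
    rw [hfx, mul_zero] at hineq
    linarith
  have hq0 : 0 ≤ q.2 :=
    closure_minimal (fun r hr => (hVsub hr).2.1.le) (isClosed_le continuous_const continuous_snd) hqV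
  have hpq : f p - ε * p.2 ≤ f q - ε * q.2 := hmax ⟨subset_closure hp, hps.le⟩
  exact ⟨q, ⟨⟨hqV, hqnV⟩, (hqs.trans_lt hsT).ne⟩, by linarith [mul_nonneg hε.le hq0]⟩

end

theorem noncylindrical_maximum_principle_general (T : ℝ)
    (V : Set (ℝ × ℝ)) (hVopen : IsOpen V) (hVne : V.Nonempty)
    (hVsub : V ⊆ (univ : Set ℝ) ×ˢ Ioo (0 : ℝ) T)
    (hVcpt : IsCompact (closure V))
    (f ft fx fxx α : ℝ × ℝ → ℝ)
    (hf : ContinuousOn f (closure V))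
    (hderiv : ∀ p ∈ V,
      HasDerivAt (fun t => f (p.1, t)) (ft p) p.2 ∧
      HasDerivAt (fun x => f (x, p.2)) (fx p) p.1 ∧
      HasDerivAt (fun x => fx (x, p.2)) (fxx p) p.1 ∧
      ft p - fxx p ≤ α p * fx p) :
    sSup (f '' V) ≤ sSup (f '' ((closure V \ V) \ {q : ℝ × ℝ | q.2 = T})) := by
  have hbdd : BddAbove (f '' parabolicBoundary V T) :=
    (hVcpt.image_of_continuousOn hf).bddAbove.mono (image_mono fun q hq => hq.1.1)
  refine csSup_le (hVne.image f) ?_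
  rintro _ ⟨p, hp, rfl⟩
  have hlim : Tendsto (fun ε : ℝ => f p - ε * p.2) (𝓝[>] 0) (𝓝 (f p)) := by
    have hcont : Continuous fun ε : ℝ => f p - ε * p.2 := by fun_prop
    simpa using tendsto_nhdsWithin_of_tendsto_nhds (hcont.tendsto 0)
  refine le_of_tendsto hlim ?_
  filter_upwards [self_mem_nhdsWithin] with ε (hε : 0 < ε)
  obtain ⟨q, hq, hle⟩ := exists_mem_parabolicBoundary_sub_mul_le hVopen hVsub hVcpt hf hderiv hp hε
  exact hle.trans (le_csSup hbdd (mem_image_of_mem f hq))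

/-- Non-Cylindrical Maximum Principle, scalar version. -/
theorem noncylindrical_maximum_principle (T : ℝ) (hT : 0 < T)
    (V : Set (ℝ × ℝ)) (hVopen : IsOpen V) (hVne : V.Nonempty)
    (hVsub : V ⊆ (univ : Set ℝ) ×ˢ Ioo (0 : ℝ) T)
    (hVcpt : IsCompact (closure V))
    (f ft fx fxx α : ℝ × ℝ → ℝ)
    (hf : ContinuousOn f (closure V))
    (hα : ContinuousOn α V)
    (hderiv : ∀ p ∈ V,
      HasDerivAt (fun t => f (p.1, t)) (ft p) p.2 ∧
      HasDerivAt (fun x => f (x, p.2)) (fx p) p.1 ∧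
      HasDerivAt (fun x => fx (x, p.2)) (fxx p) p.1 ∧
      ft p - fxx p ≤ α p * fx p) :
    sSup (f '' V) ≤ sSup (f '' ((closure V \ V) \ {q : ℝ × ℝ | q.2 = T})) :=
  noncylindrical_maximum_principle_general T V hVopen hVne hVsub hVcpt f ft fx fxx α hf hderiv
end

section
/- (Enclosing cylinder barrier) Suppose in addition that ρ(x,0) ≤ R for all x ∈ [a,b], for some R > 0. Then ρ(x,t)² ≤ R² − 2t for all (x,t) ∈ [a,b]×[0,T); in particular T ≤ R²/2, so the smooth flow cannot exist beyond time R²/2. -/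
open Set Real Filter Topology

/-- Second derivative test with one-sided information: if `f` is smooth, attains its
max over `[a,b]` at `x₀` and `deriv f x₀ = 0`, then `deriv (deriv f) x₀ ≤ 0`. -/
lemma aux_second_deriv_nonpos {f : ℝ → ℝ} {a b x₀ : ℝ} (hab : a < b)
    (hf : ContDiff ℝ (⊤ : ℕ∞) f) (hx : x₀ ∈ Icc a b)
    (hmax : ∀ x ∈ Icc a b, f x ≤ f x₀) (hd : deriv f x₀ = 0) :
    deriv (deriv f) x₀ ≤ 0 := by
  by_contra hpos
  push_neg at hpos
  have hf' : ContDiff ℝ ((⊤ : ℕ∞) : WithTop ℕ∞) f := hf.of_le (by simp)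
  have hdf : Differentiable ℝ (deriv f) :=
    (contDiff_infty_iff_deriv.mp (contDiff_infty_iff_deriv.mp hf').2).1
  have hD : HasDerivAt (deriv f) (deriv (deriv f) x₀) x₀ := (hdf x₀).hasDerivAt
  have hslope := hasDerivAt_iff_tendsto_slope.mp hD
  rcases lt_or_ge x₀ b with hxb | hxb
  · -- there is room to the right of x₀
    have hsl : Tendsto (slope (deriv f) x₀) (𝓝[>] x₀) (𝓝 (deriv (deriv f) x₀)) :=
      hslope.mono_left (nhdsWithin_mono _ fun x hx => ne_of_gt hx)
    have hev : ∀ᶠ x in 𝓝[>] x₀, 0 < slope (deriv f) x₀ x :=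
      hsl.eventually (eventually_gt_nhds hpos)
    obtain ⟨c, hc, hc2⟩ := (nhdsGT_basis_of_exists_gt ⟨b, hxb⟩).eventually_iff.mp hev
    set d := min c b with hdmin
    have hx₀d : x₀ < d := lt_min hc hxb
    set x₁ := (x₀ + d) / 2 with hx₁
    have h1 : x₀ < x₁ := by simp [hx₁]; linarith
    have h2 : x₁ < d := by simp [hx₁]; linarith
    have hmono : StrictMonoOn f (Icc x₀ x₁) := by
      apply strictMonoOn_of_deriv_pos (convex_Icc _ _) (hf.continuous.continuousOn)
      intro x hxm
      rw [interior_Icc] at hxm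
      have hxc : x ∈ Ioo x₀ c := ⟨hxm.1, lt_of_lt_of_le (hxm.2.trans_le h2.le) (min_le_left _ _)⟩
      have := hc2 hxc
      rw [slope_def_field, hd, sub_zero] at this
      have hx0 : 0 < x - x₀ := sub_pos.mpr hxm.1
      have := mul_pos this hx0
      rwa [div_mul_cancel₀ _ (ne_of_gt hx0)] at this
    have hlt : f x₀ < f x₁ := hmono (left_mem_Icc.mpr h1.le) (right_mem_Icc.mpr h1.le) h1
    have hx₁m : x₁ ∈ Icc a b := ⟨hx.1.trans h1.le, (h2.le.trans (min_le_right _ _))⟩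
    exact absurd (hmax x₁ hx₁m) (not_le.mpr hlt)
  · -- x₀ = b, so there is room to the left
    have hax : a < x₀ := lt_of_lt_of_le hab hxb
    have hsl : Tendsto (slope (deriv f) x₀) (𝓝[<] x₀) (𝓝 (deriv (deriv f) x₀)) :=
      hslope.mono_left (nhdsWithin_mono _ fun x hx => ne_of_lt hx)
    have hev : ∀ᶠ x in 𝓝[<] x₀, 0 < slope (deriv f) x₀ x :=
      hsl.eventually (eventually_gt_nhds hpos)
    obtain ⟨c, hc, hc2⟩ := (nhdsLT_basis_of_exists_lt ⟨a, hax⟩).eventually_iff.mp hev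
    set d := max c a with hdmax
    have hx₀d : d < x₀ := max_lt hc hax
    set x₁ := (d + x₀) / 2 with hx₁
    have h1 : x₁ < x₀ := by simp [hx₁]; linarith
    have h2 : d < x₁ := by simp [hx₁]; linarith
    have hanti : StrictAntiOn f (Icc x₁ x₀) := by
      apply strictAntiOn_of_deriv_neg (convex_Icc _ _) (hf.continuous.continuousOn)
      intro x hxm
      rw [interior_Icc] at hxm
      have hxc : x ∈ Ioo c x₀ := ⟨lt_of_le_of_lt (le_max_left c a) (h2.trans hxm.1), hxm.2⟩
      have := hc2 hxc
      rw [slope_def_field, hd, sub_zero] at this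
      have hx0 : x - x₀ < 0 := sub_neg.mpr hxm.2
      have hq := mul_neg_of_pos_of_neg this hx0
      rwa [div_mul_cancel₀ _ (ne_of_lt hx0)] at hq
    have hlt : f x₀ < f x₁ :=
      hanti (left_mem_Icc.mpr h1.le) (right_mem_Icc.mpr h1.le) h1
    have hx₁m : x₁ ∈ Icc a b := ⟨le_of_lt (lt_of_le_of_lt (le_max_right c a) h2),
      h1.le.trans hx.2⟩
    exact absurd (hmax x₁ hx₁m) (not_le.mpr hlt)

/-- If a differentiable function attains its max over `[0,t₀]` at the right endpoint
`t₀ > 0`, then its derivative there is nonnegative. -/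
lemma aux_left_deriv_nonneg {g : ℝ → ℝ} {t₀ : ℝ} (hg : DifferentiableAt ℝ g t₀)
    (ht : 0 < t₀) (hmax : ∀ t ∈ Icc 0 t₀, g t ≤ g t₀) : 0 ≤ deriv g t₀ := by
  have hD := hg.hasDerivAt
  have hslope := hasDerivAt_iff_tendsto_slope.mp hD
  have hs : Tendsto (slope g t₀) (𝓝[<] t₀) (𝓝 (deriv g t₀)) :=
    hslope.mono_left (nhdsWithin_mono _ fun x hx => ne_of_lt hx)
  refine ge_of_tendsto hs ?_
  filter_upwards [Ioo_mem_nhdsLT ht] with t htm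
  rw [slope_def_field, div_nonneg_iff]
  right
  exact ⟨sub_nonpos.mpr (hmax t ⟨htm.1.le, htm.2.le⟩), sub_nonpos.mpr htm.2.le⟩

/-- Enclosing cylinder barrier: if ρ(·,0) ≤ R then
ρ² ≤ R² − 2t, and consequently T ≤ R²/2. -/
theorem enclosing_cylinder_barrier (a b T R : ℝ) (ρ : ℝ → ℝ → ℝ)
    (hflow : IsAxisymMCF a b T ρ) (hR : 0 < R)
    (hinit : ∀ x ∈ Icc a b, ρ x 0 ≤ R) :
    (∀ x ∈ Icc a b, ∀ t ∈ Ico (0 : ℝ) T, ρ x t ^ 2 ≤ R ^ 2 - 2 * t) ∧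
      T ≤ R ^ 2 / 2 := by
  obtain ⟨hab, hT, hsm, hpos, hpde, hneu⟩ := hflow
  -- smoothness of slices
  have hft : ∀ t : ℝ, ContDiff ℝ (⊤ : ℕ∞) (fun x => ρ x t) := fun t =>
    hsm.comp (contDiff_id.prodMk contDiff_const)
  have hgx : ∀ x : ℝ, ContDiff ℝ (⊤ : ℕ∞) (fun t => ρ x t) := fun x =>
    hsm.comp (contDiff_const.prodMk contDiff_id)
  have hX : ∀ x t : ℝ, HasDerivAt (fun x' => ρ x' t) (rhoX ρ x t) x := fun x t =>
    ((hft t).differentiable (by simp) x).hasDerivAt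
  have hXX : ∀ x t : ℝ, HasDerivAt (fun x' => rhoX ρ x' t) (rhoXX ρ x t) x := fun x t =>
    ((contDiff_infty_iff_deriv.mp
      (contDiff_infty_iff_deriv.mp ((hft t).of_le (by simp))).2).1 x).hasDerivAt
  have hTd : ∀ x t : ℝ, HasDerivAt (fun t' => ρ x t') (rhoT ρ x t) t := fun x t =>
    ((hgx x).differentiable (by simp) t).hasDerivAt
  -- main barrier estimate with an ε-margin
  have main : ∀ ε : ℝ, 0 < ε → ∀ t₀ : ℝ, 0 ≤ t₀ → t₀ < T →
      ∀ x ∈ Icc a b, ∀ t ∈ Icc (0 : ℝ) t₀,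
        ρ x t ^ 2 - R ^ 2 + 2 * t - ε * t - ε < 0 := by
    intro ε hε t₀ ht₀0 ht₀T
    by_contra hcon
    push_neg at hcon
    obtain ⟨x₁, hx₁, t₁, ht₁, hw₁⟩ := hcon
    set w : ℝ → ℝ → ℝ := fun x t => ρ x t ^ 2 - R ^ 2 + 2 * t - ε * t - ε with hw
    have hwcont : Continuous (fun p : ℝ × ℝ => w p.1 p.2) := by
      have hc : Continuous (Function.uncurry ρ) := hsm.continuous
      exact ((((hc.pow 2).sub continuous_const).add
        (continuous_const.mul continuous_snd)).sub
          (continuous_const.mul continuous_snd)).sub continuous_const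
    set K : Set (ℝ × ℝ) := Icc a b ×ˢ Icc 0 t₀ with hK
    set C : Set (ℝ × ℝ) := K ∩ {p | 0 ≤ w p.1 p.2} with hC
    have hCcomp : IsCompact C :=
      (isCompact_Icc.prod isCompact_Icc).inter_right
        (isClosed_le continuous_const hwcont)
    have hCne : C.Nonempty := ⟨(x₁, t₁), ⟨hx₁, ht₁⟩, hw₁⟩
    obtain ⟨p₀, hp₀C, hmin⟩ := hCcomp.exists_isMinOn hCne continuous_snd.continuousOn
    set t₂ : ℝ := p₀.2 with ht₂
    have hp₀K : p₀ ∈ K := hp₀C.1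
    have hp₀w : 0 ≤ w p₀.1 p₀.2 := hp₀C.2
    have ht₂mem : t₂ ∈ Icc (0 : ℝ) t₀ := hp₀K.2
    -- t₂ > 0
    have ht₂pos : 0 < t₂ := by
      rcases lt_or_eq_of_le ht₂mem.1 with h | h
      · exact h
      · exfalso
        have hx₀ : p₀.1 ∈ Icc a b := hp₀K.1
        have h0T : (0 : ℝ) ∈ Ico (0 : ℝ) T := ⟨le_refl _, hT⟩
        have hρ0 : 0 < ρ p₀.1 0 := hpos _ hx₀ 0 h0T
        have hle : ρ p₀.1 0 ≤ R := hinit _ hx₀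
        have hsq : ρ p₀.1 0 ^ 2 ≤ R ^ 2 := pow_le_pow_left₀ hρ0.le hle 2
        have hp2 : p₀.2 = 0 := by rw [← ht₂, ← h]
        have : 0 ≤ w p₀.1 0 := hp2 ▸ hp₀w
        simp only [hw] at this
        nlinarith
    have ht₂T : t₂ < T := lt_of_le_of_lt ht₂mem.2 ht₀T
    have ht₂Ico : t₂ ∈ Ico (0 : ℝ) T := ⟨ht₂mem.1, ht₂T⟩
    -- spatial maximum of w(·, t₂)
    have hwc2 : ContinuousOn (fun x => w x t₂) (Icc a b) := by
      have : Continuous (fun x => w x t₂) :=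
        hwcont.comp (continuous_id.prodMk continuous_const)
      exact this.continuousOn
    obtain ⟨x₂, hx₂, hmaxsp'⟩ := isCompact_Icc.exists_isMaxOn
      ⟨a, left_mem_Icc.mpr hab.le⟩ hwc2
    have hmaxsp : ∀ x ∈ Icc a b, w x t₂ ≤ w x₂ t₂ := fun x hx => hmaxsp' hx
    have hw₂ : 0 ≤ w x₂ t₂ := le_trans hp₀w (hmaxsp _ hp₀K.1)
    -- temporal maximum of w(x₂, ·) on [0, t₂]
    have hmaxt : ∀ t ∈ Icc 0 t₂, w x₂ t ≤ w x₂ t₂ := by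
      intro t ht
      rcases lt_or_eq_of_le ht.2 with hlt | heq
      · by_contra hcc
        push_neg at hcc
        have hwt : 0 ≤ w x₂ t := le_trans hw₂ hcc.le
        have hmem : (x₂, t) ∈ C :=
          ⟨⟨hx₂, ⟨ht.1, hlt.le.trans ht₂mem.2⟩⟩, hwt⟩
        have := hmin hmem
        exact absurd this (not_le.mpr hlt)
      · rw [heq]
    have hPpos : 0 < ρ x₂ t₂ := hpos _ hx₂ _ ht₂Ico
    -- spatial derivative of w(·,t₂)
    have hWd : ∀ x : ℝ, HasDerivAt (fun x' => w x' t₂) (2 * ρ x t₂ * rhoX ρ x t₂) x := by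
      intro x
      have h1 := ((hX x t₂).fun_pow 2)
      have h2 := (((h1.sub_const (R ^ 2)).add_const (2 * t₂)).sub_const (ε * t₂)).sub_const ε
      have : (fun x' => ρ x' t₂ ^ 2 - R ^ 2 + 2 * t₂ - ε * t₂ - ε) = fun x' => w x' t₂ := rfl
      rw [this] at h2
      refine h2.congr_deriv ?_
      norm_num
    -- rhoX vanishes at x₂
    have hXzero : rhoX ρ x₂ t₂ = 0 := by
      rcases eq_or_lt_of_le hx₂.1 with ha' | ha'
      · rw [← ha']; exact (hneu t₂ ht₂Ico).1
      rcases eq_or_lt_of_le hx₂.2 with hb' | hb'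
      · rw [hb']; exact (hneu t₂ ht₂Ico).2
      · have hloc : IsLocalMax (fun x => w x t₂) x₂ := by
          have hmem : Icc a b ∈ 𝓝 x₂ := Icc_mem_nhds ha' hb'
          exact Filter.eventually_of_mem hmem hmaxsp
        have h0 := hloc.deriv_eq_zero
        rw [(hWd x₂).deriv] at h0
        rcases mul_eq_zero.mp h0 with h | h
        · exact absurd h (by positivity)
        · exact h
    have hderiv0 : deriv (fun x' => w x' t₂) x₂ = 0 := by
      rw [(hWd x₂).deriv, hXzero]; ring
    -- second spatial derivative
    have hderivfun : deriv (fun x' => w x' t₂) = fun x => 2 * ρ x t₂ * rhoX ρ x t₂ :=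
      funext fun x => (hWd x).deriv
    have hW2 : HasDerivAt (deriv (fun x' => w x' t₂))
        (2 * rhoX ρ x₂ t₂ * rhoX ρ x₂ t₂ + 2 * ρ x₂ t₂ * rhoXX ρ x₂ t₂) x₂ := by
      rw [hderivfun]
      exact ((hX x₂ t₂).const_mul 2).mul (hXX x₂ t₂)
    have hwsm : ContDiff ℝ (⊤ : ℕ∞) (fun x' => w x' t₂) := by
      have : (fun x' => w x' t₂) =
          fun x' => ρ x' t₂ ^ 2 - R ^ 2 + 2 * t₂ - ε * t₂ - ε := rfl
      rw [this]
      exact (((((hft t₂).pow 2).sub contDiff_const).add contDiff_const).sub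
        contDiff_const).sub contDiff_const
    have hsec : deriv (deriv (fun x' => w x' t₂)) x₂ ≤ 0 :=
      aux_second_deriv_nonpos hab hwsm hx₂ hmaxsp hderiv0
    rw [hW2.deriv, hXzero] at hsec
    -- time derivative
    have hWt : HasDerivAt (fun t => w x₂ t) (2 * ρ x₂ t₂ * rhoT ρ x₂ t₂ + 2 - ε) t₂ := by
      have h1 := (hTd x₂ t₂).fun_pow 2
      have h2 := ((((h1.sub_const (R ^ 2)).fun_add
        ((hasDerivAt_id t₂).const_mul 2)).fun_sub
        ((hasDerivAt_id t₂).const_mul ε)).sub_const ε)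
      simp only [id_eq] at h2
      have he : (fun t => ρ x₂ t ^ 2 - R ^ 2 + 2 * t - ε * t - ε) = fun t => w x₂ t := rfl
      rw [he] at h2
      refine h2.congr_deriv ?_
      norm_num
    have htder : 0 ≤ deriv (fun t => w x₂ t) t₂ :=
      aux_left_deriv_nonneg hWt.differentiableAt ht₂pos hmaxt
    rw [hWt.deriv] at htder
    -- PDE at the point
    have hpde2 := hpde _ hx₂ _ ht₂Ico
    rw [hXzero] at hpde2
    have hTval : rhoT ρ x₂ t₂ = rhoXX ρ x₂ t₂ - 1 / ρ x₂ t₂ := by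
      rw [hpde2]; norm_num
    -- contradiction
    have hPXX : ρ x₂ t₂ * rhoXX ρ x₂ t₂ ≤ 0 := by nlinarith
    have hPinv : ρ x₂ t₂ * (1 / ρ x₂ t₂) = 1 := by field_simp
    nlinarith [htder, hTval, hPXX, hε]
  -- derive the barrier without ε
  have key : ∀ x ∈ Icc a b, ∀ t ∈ Ico (0 : ℝ) T, ρ x t ^ 2 ≤ R ^ 2 - 2 * t := by
    intro x hx t ht
    by_contra hcc
    push_neg at hcc
    set q := ρ x t ^ 2 - R ^ 2 + 2 * t with hq
    have hqpos : 0 < q := by simp only [hq]; linarith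
    have ht1 : (0 : ℝ) < t + 1 := by linarith [ht.1]
    set ε := q / (2 * (t + 1)) with hε
    have hεpos : 0 < ε := by positivity
    have := main ε hεpos t ht.1 ht.2 x hx t ⟨ht.1, le_refl _⟩
    have hεt : ε * t + ε = q / 2 := by
      field_simp [hε]
      rw [hε]; field_simp
    nlinarith
  refine ⟨key, ?_⟩
  by_contra hTc
  push_neg at hTc
  have htmem : R ^ 2 / 2 ∈ Ico (0 : ℝ) T := ⟨by positivity, hTc⟩
  have hamem : a ∈ Icc a b := left_mem_Icc.mpr hab.le
  have h1 := key a hamem _ htmem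
  have h2 : 0 < ρ a (R ^ 2 / 2) := hpos a hamem _ htmem
  nlinarith
end
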